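/- arXiv:1108.2850 — 7 statements merged into one kernel-verified Lean document; each statement's English description precedes it below -/
import Mathlib

section
/- Let M = {[1,2|2,3], [2,3|3,4], [3,4|2,3], [2,3|1,2]} be the set of adjacent 2-minors of a 4×4 matrix X = (x_ij) of indeterminates, and let I_M be the ideal of the polynomial ring K[x_11,...,x_44] generated by the four binomials x_12·x_23 − x_13·x_22, x_23·x_34 − x_24·x_33, x_32·x_43 − x_33·x_42, and x_21·x_32 − x_22·x_31. Then the binomial x_32·(x_13·x_21·x_34·x_42 − x_12·x_24·x_31·x_43) belongs to I_M, but neither x_32 nor x_13·x_21·x_34·x_42 − x_12·x_24·x_31·x_43 belongs to I_M; consequently I_M is not a prime ideal. -/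
open MvPolynomial

/-- The ideal generated by the four adjacent 2-minors
`[1,2|2,3], [2,3|3,4], [3,4|2,3], [2,3|1,2]` of a matrix of indeterminates contains
`x₃₂·(x₁₃x₂₁x₃₄x₄₂ − x₁₂x₂₄x₃₁x₄₃)` but neither factor; hence it is not prime. -/
theorem stmt0 (K : Type*) [Field K] (I : Ideal (MvPolynomial (ℕ × ℕ) K))
    (hI : I = Ideal.span
      {X (1,2) * X (2,3) - X (1,3) * X (2,2),
       X (2,3) * X (3,4) - X (2,4) * X (3,3),
       X (3,2) * X (4,3) - X (3,3) * X (4,2),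
       X (2,1) * X (3,2) - X (2,2) * X (3,1)}) :
    X (3,2) * (X (1,3) * X (2,1) * X (3,4) * X (4,2)
        - X (1,2) * X (2,4) * X (3,1) * X (4,3)) ∈ I ∧
    X (3,2) ∉ I ∧
    (X (1,3) * X (2,1) * X (3,4) * X (4,2)
        - X (1,2) * X (2,4) * X (3,1) * X (4,3)) ∉ I ∧
    ¬ I.IsPrime := by
  subst hI
  set S : Set (MvPolynomial (ℕ × ℕ) K) :=
    {X (1,2) * X (2,3) - X (1,3) * X (2,2),
     X (2,3) * X (3,4) - X (2,4) * X (3,3),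
     X (3,2) * X (4,3) - X (3,3) * X (4,2),
     X (2,1) * X (3,2) - X (2,2) * X (3,1)} with hS
  have h1 : (X (1,2) * X (2,3) - X (1,3) * X (2,2) : MvPolynomial (ℕ × ℕ) K) ∈ Ideal.span S :=
    Ideal.subset_span (by simp [hS])
  have h2 : (X (2,3) * X (3,4) - X (2,4) * X (3,3) : MvPolynomial (ℕ × ℕ) K) ∈ Ideal.span S :=
    Ideal.subset_span (by simp [hS])
  have h3 : (X (3,2) * X (4,3) - X (3,3) * X (4,2) : MvPolynomial (ℕ × ℕ) K) ∈ Ideal.span S :=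
    Ideal.subset_span (by simp [hS])
  have h4 : (X (2,1) * X (3,2) - X (2,2) * X (3,1) : MvPolynomial (ℕ × ℕ) K) ∈ Ideal.span S :=
    Ideal.subset_span (by simp [hS])
  have hmem : X (3,2) * (X (1,3) * X (2,1) * X (3,4) * X (4,2)
      - X (1,2) * X (2,4) * X (3,1) * X (4,3)) ∈ Ideal.span S := by
    have key : (X (3,2) : MvPolynomial (ℕ × ℕ) K) * (X (1,3) * X (2,1) * X (3,4) * X (4,2)
        - X (1,2) * X (2,4) * X (3,1) * X (4,3))
      = X (1,3) * X (3,4) * X (4,2) * (X (2,1) * X (3,2) - X (2,2) * X (3,1))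
        - X (3,1) * X (3,4) * X (4,2) * (X (1,2) * X (2,3) - X (1,3) * X (2,2))
        + X (1,2) * X (3,1) * X (4,2) * (X (2,3) * X (3,4) - X (2,4) * X (3,3))
        - X (1,2) * X (2,4) * X (3,1) * (X (3,2) * X (4,3) - X (3,3) * X (4,2)) := by
      ring
    rw [key]
    exact Ideal.sub_mem _
      (Ideal.add_mem _
        (Ideal.sub_mem _ (Ideal.mul_mem_left _ _ h4) (Ideal.mul_mem_left _ _ h1))
        (Ideal.mul_mem_left _ _ h2))
      (Ideal.mul_mem_left _ _ h3)
  -- evaluation killing the generators but not x₃₂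
  have hx32 : (X (3,2) : MvPolynomial (ℕ × ℕ) K) ∉ Ideal.span S := by
    intro h
    set v1 : ℕ × ℕ → K := fun p => if p = (3,2) then 1 else 0 with hv1
    have hker : Ideal.span S ≤ RingHom.ker (aeval v1 : MvPolynomial (ℕ × ℕ) K →ₐ[K] K) := by
      rw [Ideal.span_le]
      intro f hf
      simp only [hS, Set.mem_insert_iff, Set.mem_singleton_iff] at hf
      rcases hf with rfl | rfl | rfl | rfl <;>
        simp [RingHom.mem_ker, hv1]
    have := hker h
    simp [RingHom.mem_ker, hv1] at this
  have hg : (X (1,3) * X (2,1) * X (3,4) * X (4,2)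
      - X (1,2) * X (2,4) * X (3,1) * X (4,3) : MvPolynomial (ℕ × ℕ) K) ∉ Ideal.span S := by
    intro h
    set v2 : ℕ × ℕ → K := fun p =>
      if p = (1,3) ∨ p = (2,1) ∨ p = (3,4) ∨ p = (4,2) then 1 else 0 with hv2
    have hker : Ideal.span S ≤ RingHom.ker (aeval v2 : MvPolynomial (ℕ × ℕ) K →ₐ[K] K) := by
      rw [Ideal.span_le]
      intro f hf
      simp only [hS, Set.mem_insert_iff, Set.mem_singleton_iff] at hf
      rcases hf with rfl | rfl | rfl | rfl <;>
        simp [RingHom.mem_ker, hv2]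
    have := hker h
    simp [RingHom.mem_ker, hv2] at this
  refine ⟨hmem, hx32, hg, ?_⟩
  intro hp
  rcases hp.mem_or_mem hmem with h | h
  · exact hx32 h
  · exact hg h
end

section
/- The ideal I = ⟨x_1x_2 − x_3x_4, x_1x_2 − x_5x_6, x_1x_2 − x_7x_8⟩ in the polynomial ring K[x_1,...,x_8] equals the kernel of the K-algebra homomorphism π : K[x_1,...,x_8] → K[t_1,...,t_5] defined by π(x_1) = t_1t_5, π(x_2) = t_2t_3t_4t_5, π(x_3) = t_1t_2t_5, π(x_4) = t_3t_4t_5, π(x_5) = t_2t_3t_5, π(x_6) = t_1t_4t_5, π(x_7) = t_1t_3t_5, π(x_8) = t_2t_4t_5. In particular, I is a prime ideal. -/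
/-!
The three binomials form a Gröbner basis of `I`: rewriting `x₃x₄`, `x₅x₆`, `x₇x₈` to `x₁x₂`
lowers the degree in `x₃, …, x₈`, so modulo `I` every polynomial is a combination of standard
monomials, those divisible by none of `x₃x₄`, `x₅x₆`, `x₇x₈`. The map `π` sends monomials to
monomials, injectively on standard ones: the exponent of `π(xᵃ)` determines `a` once one variable
of each pair `{x₃, x₄}`, `{x₅, x₆}`, `{x₇, x₈}` is absent. Hence a standard combination in `ker π`
is zero and `ker π ⊆ I`; the reverse inclusion is a direct check, and `ker π` is prime since
`K[t₁, …, t₅]` is a domain.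
-/

open MvPolynomial Finsupp

section MonomialMaps

variable {σ τ R : Type*} [CommSemiring R]

theorem aeval_monomial_monomial (m : σ → τ →₀ ℕ) (s : σ →₀ ℕ) (c : R) :
    aeval (fun i => monomial (m i) (1 : R)) (monomial s c) =
      monomial (linearCombination ℕ m s) c := by
  simp only [aeval_monomial, monomial_pow, one_pow, linearCombination_apply,
    monomial_finsupp_sum_index, algebraMap_eq]

theorem eq_zero_of_map_eq_zero_of_injOn (f : MvPolynomial σ R →+ MvPolynomial τ R)
    {M : (σ →₀ ℕ) → τ →₀ ℕ} (hf : ∀ s c, f (monomial s c) = monomial (M s) c)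
    {p : MvPolynomial σ R} (hM : Set.InjOn M p.support) (hp : f p = 0) : p = 0 := by
  have hsum : f p = ∑ b ∈ p.support, monomial (M b) (coeff b p) := by
    conv_lhs => rw [← p.support_sum_monomial_coeff]
    simp only [map_sum, hf]
  ext a
  by_cases ha : a ∈ p.support
  · classical
    have := congrArg (coeff (M a)) hsum
    rw [hp, coeff_zero, coeff_sum, Finset.sum_eq_single_of_mem a ha] at this
    · simpa only [coeff_zero, coeff_monomial, ↓reduceIte] using this.symm
    · intro b hb hba
      rw [coeff_monomial, if_neg fun h => hba (hM hb ha h)]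
  · simpa using ha

end MonomialMaps

section NormalForms

variable {σ R : Type*} [CommRing R]

theorem monomial_sub_monomial_mem {J : Ideal (MvPolynomial σ R)} {u v : σ →₀ ℕ}
    (h : monomial u (1 : R) - monomial v 1 ∈ J) {a : σ →₀ ℕ} (hua : u ≤ a) (c : R) :
    monomial a c - monomial (a - u + v) c ∈ J := by
  have : monomial a c - monomial (a - u + v) c =
      (monomial u 1 - monomial v 1) * monomial (a - u) c := by
    rw [sub_mul, monomial_mul, monomial_mul, one_mul, add_tsub_cancel_of_le hua, add_comm v]
  exact this ▸ J.mul_mem_right _ h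

theorem exists_sub_mem_restrictSupport {J : Ideal (MvPolynomial σ R)} {S : Set (σ →₀ ℕ)}
    (μ : (σ →₀ ℕ) → ℕ)
    (hstep : ∀ a ∉ S, ∃ a', μ a' < μ a ∧ ∀ c : R, monomial a c - monomial a' c ∈ J)
    (p : MvPolynomial σ R) : ∃ g ∈ restrictSupport R S, p - g ∈ J := by
  have hmonomial : ∀ a (c : R), ∃ g ∈ restrictSupport R S, monomial a c - g ∈ J := by
    intro a
    induction a using (measure μ).wf.induction with
    | h a ih =>
      intro c
      by_cases ha : a ∈ S
      · exact ⟨monomial a c, (monomial_mem_restrictSupport R).2 (Or.inl ha), by simp⟩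
      · obtain ⟨a', hlt, hJ⟩ := hstep a ha
        obtain ⟨g, hg, hg'⟩ := ih a' hlt c
        exact ⟨g, hg, by simpa using J.add_mem (hJ c) hg'⟩
  induction p using MvPolynomial.induction_on' with
  | monomial a c => exact hmonomial a c
  | add p q hp hq =>
    obtain ⟨g, hg, hpg⟩ := hp
    obtain ⟨h, hh, hqh⟩ := hq
    exact ⟨g + h, add_mem hg hh, by simpa [add_sub_add_comm] using J.add_mem hpg hqh⟩

end NormalForms

theorem RingHom.ker_eq_of_forall_exists_sub_mem {A B : Type*} [CommRing A] [Ring B]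
    (f : A →+* B) {J : Ideal A} {V : Set A} (hJ : J ≤ RingHom.ker f)
    (hV : ∀ p, ∃ g ∈ V, p - g ∈ J) (hinj : ∀ g ∈ V, f g = 0 → g = 0) :
    J = RingHom.ker f := by
  refine le_antisymm hJ fun p hp => ?_
  obtain ⟨g, hg, hpg⟩ := hV p
  have hfg : f g = 0 := by
    have := hJ hpg
    rwa [RingHom.mem_ker, map_sub, RingHom.mem_ker.1 hp, zero_sub, neg_eq_zero] at this
  simpa [hinj g hg hfg] using hpg

noncomputable def toricExponent : Fin 8 → Fin 5 →₀ ℕ :=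
  ![single 0 1 + single 4 1,
    single 1 1 + single 2 1 + single 3 1 + single 4 1,
    single 0 1 + single 1 1 + single 4 1,
    single 2 1 + single 3 1 + single 4 1,
    single 1 1 + single 2 1 + single 4 1,
    single 0 1 + single 3 1 + single 4 1,
    single 0 1 + single 2 1 + single 4 1,
    single 1 1 + single 3 1 + single 4 1]

theorem toricMonomials_eq_monomial (K : Type*) [CommSemiring K] :
    (![X 0 * X 4, X 1 * X 2 * X 3 * X 4, X 0 * X 1 * X 4, X 2 * X 3 * X 4,
        X 1 * X 2 * X 4, X 0 * X 3 * X 4, X 0 * X 2 * X 4, X 1 * X 3 * X 4] :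
      Fin 8 → MvPolynomial (Fin 5) K) = fun i => monomial (toricExponent i) 1 := by
  funext i
  fin_cases i <;> simp [toricExponent, X, monomial_mul]

def standardExponents : Set (Fin 8 →₀ ℕ) :=
  {a | (a 2 = 0 ∨ a 3 = 0) ∧ (a 4 = 0 ∨ a 5 = 0) ∧ (a 6 = 0 ∨ a 7 = 0)}

theorem linearCombination_toricExponent_apply (s : Fin 8 →₀ ℕ) (j : Fin 5) :
    linearCombination ℕ toricExponent s j = ∑ i, s i * toricExponent i j := by
  rw [linearCombination_apply, Finsupp.sum_fintype _ _ (by simp), Finsupp.finsetSum_apply]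
  simp [mul_comm]

theorem injOn_linearCombination_toricExponent :
    Set.InjOn (linearCombination ℕ toricExponent) standardExponents := by
  rintro s ⟨hs₁, hs₂, hs₃⟩ t ⟨ht₁, ht₂, ht₃⟩ h
  have e (j : Fin 5) : ∑ i, s i * toricExponent i j = ∑ i, t i * toricExponent i j := by
    simpa only [linearCombination_toricExponent_apply] using DFunLike.congr_fun h j
  have e0 := e 0; have e1 := e 1; have e2 := e 2; have e3 := e 3; have e4 := e 4
  simp only [toricExponent, Fin.sum_univ_eight, Matrix.cons_val, Finsupp.coe_add, Pi.add_apply,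
    single_apply, Fin.reduceEq, ↓reduceIte, mul_one, mul_zero, add_zero, zero_add] at e0 e1 e2 e3 e4
  ext i
  fin_cases i <;> simp only [Fin.zero_eta, Fin.mk_one, Fin.reduceFinMk] <;> omega

def tailDegree (a : Fin 8 →₀ ℕ) : ℕ := a 2 + a 3 + a 4 + a 5 + a 6 + a 7

section Reduction

variable {R : Type*} [CommRing R] {J : Ideal (MvPolynomial (Fin 8) R)}

theorem monomial_sub_monomial_swap_mem {i j : Fin 8} (hJ : X 0 * X 1 - X i * X j ∈ J)
    (hij : i ≠ j) {a : Fin 8 →₀ ℕ} (hi : a i ≠ 0) (hj : a j ≠ 0) (c : R) :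
    monomial a c - monomial (a - (single i 1 + single j 1) + (single 0 1 + single 1 1)) c ∈ J := by
  refine monomial_sub_monomial_mem ?_ ?_ c
  · simpa only [X, monomial_mul, mul_one, neg_sub] using J.neg_mem hJ
  · intro k
    simp only [Finsupp.coe_add, Pi.add_apply, single_apply]
    split_ifs <;> subst_vars <;> omega

theorem exists_tailDegree_lt (h₁ : X 0 * X 1 - X 2 * X 3 ∈ J) (h₂ : X 0 * X 1 - X 4 * X 5 ∈ J)
    (h₃ : X 0 * X 1 - X 6 * X 7 ∈ J) (a : Fin 8 →₀ ℕ) (ha : a ∉ standardExponents) :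
    ∃ a', tailDegree a' < tailDegree a ∧ ∀ c : R, monomial a c - monomial a' c ∈ J := by
  simp only [standardExponents, Set.mem_ofPred_eq, not_and_or, not_or] at ha
  rcases ha with ⟨hi, hj⟩ | ⟨hi, hj⟩ | ⟨hi, hj⟩ <;>
  · refine ⟨_, ?_, monomial_sub_monomial_swap_mem (by assumption) (by decide) hi hj⟩
    simp only [tailDegree, Finsupp.coe_add, coe_tsub, Pi.add_apply, Pi.sub_apply, single_apply,
      Fin.reduceEq, ↓reduceIte]
    omega

end Reduction

/-- The ideal `⟨x₁x₂ − x₃x₄, x₁x₂ − x₅x₆, x₁x₂ − x₇x₈⟩` equals the kernel of the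
`K`-algebra map `xᵢ ↦` the indicated monomials in `t₁,…,t₅`; in particular it is prime.
(Variables are indexed from 0: `x_{i+1} = X i`, `t_{j+1} = X j`.) -/
theorem stmt1 (K : Type*) [Field K] (I : Ideal (MvPolynomial (Fin 8) K))
    (hI : I = Ideal.span
      {X 0 * X 1 - X 2 * X 3, X 0 * X 1 - X 4 * X 5, X 0 * X 1 - X 6 * X 7}) :
    I = RingHom.ker (MvPolynomial.aeval
        (![X 0 * X 4, X 1 * X 2 * X 3 * X 4, X 0 * X 1 * X 4, X 2 * X 3 * X 4,
           X 1 * X 2 * X 4, X 0 * X 3 * X 4, X 0 * X 2 * X 4, X 1 * X 3 * X 4] :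
          Fin 8 → MvPolynomial (Fin 5) K)).toRingHom ∧
    I.IsPrime := by
  have hle : I ≤ RingHom.ker (MvPolynomial.aeval
      (![X 0 * X 4, X 1 * X 2 * X 3 * X 4, X 0 * X 1 * X 4, X 2 * X 3 * X 4,
         X 1 * X 2 * X 4, X 0 * X 3 * X 4, X 0 * X 2 * X 4, X 1 * X 3 * X 4] :
        Fin 8 → MvPolynomial (Fin 5) K)).toRingHom := by
    simp only [hI, Ideal.span_le, Set.insert_subset_iff, Set.singleton_subset_iff,
      SetLike.mem_coe, RingHom.mem_ker, AlgHom.toRingHom_eq_coe, RingHom.coe_coe, map_sub,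
      map_mul, aeval_X, Matrix.cons_val_zero, Matrix.cons_val_one, Matrix.cons_val]
    refine ⟨?_, ?_, ?_⟩ <;> ring
  have hgen : ∀ p ∈ ({X 0 * X 1 - X 2 * X 3, X 0 * X 1 - X 4 * X 5, X 0 * X 1 - X 6 * X 7} :
      Set (MvPolynomial (Fin 8) K)), p ∈ I := fun p hp => hI ▸ Ideal.subset_span hp
  rw [toricMonomials_eq_monomial] at hle ⊢
  have hker := RingHom.ker_eq_of_forall_exists_sub_mem _ hle
    (exists_sub_mem_restrictSupport tailDegree
      (exists_tailDegree_lt (hgen _ (by simp)) (hgen _ (by simp)) (hgen _ (by simp))))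
    fun g hg => eq_zero_of_map_eq_zero_of_injOn (aeval _).toAddMonoidHom
      (aeval_monomial_monomial toricExponent)
      (injOn_linearCombination_toricExponent.mono hg)
  exact ⟨hker, hker ▸ RingHom.ker_isPrime _⟩
end

section
/- There is no finite simple graph G such that the toric ideal I_G of G equals the ideal I = ⟨x_1x_2 − x_3x_4, x_1x_2 − x_5x_6, x_1x_2 − x_7x_8⟩ ⊆ K[x_1,...,x_8]. Equivalently, one cannot find a finite simple graph G with 8 edges e_1,...,e_8 such that, under the map sending x_i to the monomial t_jt_k for e_i = {j,k}, the kernel is exactly I. (The obstruction: each of the three quadratic binomials would correspond to a 4-cycle of G, and all three 4-cycles would need to contain the two disjoint edges e_1 and e_2, which is impossible.) -/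
open MvPolynomial

/-- The squarefree quadratic monomial `tᵢ·tⱼ` attached to an (unordered) edge `{i,j}`. -/
noncomputable def edgeMonomial (K : Type*) [Field K] {V : Type*} (e : Sym2 V) :
    MvPolynomial V K :=
  Sym2.lift ⟨fun i j => X i * X j, fun _ _ => mul_comm _ _⟩ e

/-- The monomial map sending each edge-variable to the product of its endpoints. -/
noncomputable def toricMap (K : Type*) [Field K] {σ V : Type*} (e : σ → Sym2 V) :
    MvPolynomial σ K →ₐ[K] MvPolynomial V K :=
  aeval fun v => edgeMonomial K (e v)

/-- From an equality of squarefree quartic monomials we get an equality of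
multisets of variables. -/
lemma mulX_eq_multiset (K : Type*) [Field K] {V : Type*} {a b c d p q r s : V}
    (h : (X a * X b * (X c * X d) : MvPolynomial V K) = X p * X q * (X r * X s)) :
    ({a, b, c, d} : Multiset V) = {p, q, r, s} := by
  classical
  simp only [X, monomial_mul, one_mul] at h
  rw [monomial_eq_monomial_iff] at h
  rcases h with ⟨h, -⟩ | ⟨h, -⟩
  · have := congrArg Finsupp.toMultiset h
    simp only [Finsupp.toMultiset_add, Finsupp.toMultiset_single, one_smul] at this
    simpa only [Multiset.singleton_add, Multiset.cons_add, Multiset.insert_eq_cons] using this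
  · exact absurd h one_ne_zero

lemma pair2 {V : Type*} {x y u v : V} (h : ({x, y} : Multiset V) = {u, v}) :
    s(x, y) = s(u, v) := by
  have hx : x = u ∨ x = v := by
    have : x ∈ ({u, v} : Multiset V) := by rw [← h]; simp
    simpa using this
  rw [Sym2.eq_iff]
  rcases hx with hx | hx
  · left
    refine ⟨hx, ?_⟩
    rw [hx] at h
    simp only [Multiset.insert_eq_cons] at h
    have := (Multiset.cons_inj_right u).mp h
    simpa using this
  · right
    refine ⟨hx, ?_⟩
    rw [hx] at h
    have h' : ({u, v} : Multiset V) = v ::ₘ {u} := by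
      simp only [Multiset.insert_eq_cons, ← Multiset.singleton_add]; abel
    rw [h'] at h
    simp only [Multiset.insert_eq_cons] at h
    have := (Multiset.cons_inj_right v).mp h
    simpa using this

/-- The key combinatorial fact: if a multiset of four vertices is split into two
pairs in two ways, the second way is one of the three canonical pairings. -/
lemma pairing {V : Type*} {a b c d p q r s : V}
    (h : ({p, q, r, s} : Multiset V) = {a, b, c, d}) :
    s(s(p, q), s(r, s)) = s(s(a, b), s(c, d)) ∨
      s(s(p, q), s(r, s)) = s(s(a, c), s(b, d)) ∨
      s(s(p, q), s(r, s)) = s(s(a, d), s(b, c)) := by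
  have hp : p = a ∨ p = b ∨ p = c ∨ p = d := by
    have : p ∈ ({a, b, c, d} : Multiset V) := by rw [← h]; simp
    simpa using this
  -- helper to move an element to the front of a 4-element multiset literal
  have front4 : ∀ x y z w : V, ({x, y, z, w} : Multiset V) = y ::ₘ {x, z, w} ∧
      ({x, y, z, w} : Multiset V) = z ::ₘ {x, y, w} ∧
      ({x, y, z, w} : Multiset V) = w ::ₘ {x, y, z} := by
    intro x y z w
    refine ⟨?_, ?_, ?_⟩ <;>
      · simp only [Multiset.insert_eq_cons, ← Multiset.singleton_add]; abel
  have front3 : ∀ x y z : V, ({x, y, z} : Multiset V) = y ::ₘ {x, z} ∧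
      ({x, y, z} : Multiset V) = z ::ₘ {x, y} := by
    intro x y z
    constructor <;>
      · simp only [Multiset.insert_eq_cons, ← Multiset.singleton_add]; abel
  rcases hp with rfl | rfl | rfl | rfl
  · -- p = a
    have h2 : ({q, r, s} : Multiset V) = {b, c, d} := by
      simp only [Multiset.insert_eq_cons] at h
      exact (Multiset.cons_inj_right p).mp h
    have hq : q = b ∨ q = c ∨ q = d := by
      have : q ∈ ({b, c, d} : Multiset V) := by rw [← h2]; simp
      simpa using this
    rcases hq with rfl | rfl | rfl
    · have h3 : ({r, s} : Multiset V) = {c, d} := by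
        simp only [Multiset.insert_eq_cons] at h2
        exact (Multiset.cons_inj_right q).mp h2
      rw [pair2 h3]; simp [Sym2.eq_iff]
    · have h3 : ({r, s} : Multiset V) = {b, d} := by
        rw [(front3 b q d).1] at h2
        simp only [Multiset.insert_eq_cons] at h2
        exact (Multiset.cons_inj_right q).mp h2
      rw [pair2 h3]; simp [Sym2.eq_iff]
    · have h3 : ({r, s} : Multiset V) = {b, c} := by
        rw [(front3 b c q).2] at h2
        simp only [Multiset.insert_eq_cons] at h2
        exact (Multiset.cons_inj_right q).mp h2
      rw [pair2 h3]; simp [Sym2.eq_iff]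
  · -- p = b
    have h2 : ({q, r, s} : Multiset V) = {a, c, d} := by
      rw [(front4 a p c d).1] at h
      simp only [Multiset.insert_eq_cons] at h
      exact (Multiset.cons_inj_right p).mp h
    have hq : q = a ∨ q = c ∨ q = d := by
      have : q ∈ ({a, c, d} : Multiset V) := by rw [← h2]; simp
      simpa using this
    rcases hq with rfl | rfl | rfl
    · have h3 : ({r, s} : Multiset V) = {c, d} := by
        simp only [Multiset.insert_eq_cons] at h2
        exact (Multiset.cons_inj_right q).mp h2
      rw [pair2 h3]
      simp [Sym2.eq_iff]
    · have h3 : ({r, s} : Multiset V) = {a, d} := by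
        rw [(front3 a q d).1] at h2
        simp only [Multiset.insert_eq_cons] at h2
        exact (Multiset.cons_inj_right q).mp h2
      rw [pair2 h3]
      simp [Sym2.eq_iff]
    · have h3 : ({r, s} : Multiset V) = {a, c} := by
        rw [(front3 a c q).2] at h2
        simp only [Multiset.insert_eq_cons] at h2
        exact (Multiset.cons_inj_right q).mp h2
      rw [pair2 h3]
      simp [Sym2.eq_iff]
  · -- p = c
    have h2 : ({q, r, s} : Multiset V) = {a, b, d} := by
      rw [(front4 a b p d).2.1] at h
      simp only [Multiset.insert_eq_cons] at h
      exact (Multiset.cons_inj_right p).mp h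
    have hq : q = a ∨ q = b ∨ q = d := by
      have : q ∈ ({a, b, d} : Multiset V) := by rw [← h2]; simp
      simpa using this
    rcases hq with rfl | rfl | rfl
    · have h3 : ({r, s} : Multiset V) = {b, d} := by
        simp only [Multiset.insert_eq_cons] at h2
        exact (Multiset.cons_inj_right q).mp h2
      rw [pair2 h3]
      simp [Sym2.eq_iff]
    · have h3 : ({r, s} : Multiset V) = {a, d} := by
        rw [(front3 a q d).1] at h2
        simp only [Multiset.insert_eq_cons] at h2
        exact (Multiset.cons_inj_right q).mp h2
      rw [pair2 h3]
      simp [Sym2.eq_iff]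
    · have h3 : ({r, s} : Multiset V) = {a, b} := by
        rw [(front3 a b q).2] at h2
        simp only [Multiset.insert_eq_cons] at h2
        exact (Multiset.cons_inj_right q).mp h2
      rw [pair2 h3]
      simp [Sym2.eq_iff]
  · -- p = d
    have h2 : ({q, r, s} : Multiset V) = {a, b, c} := by
      rw [(front4 a b c p).2.2] at h
      simp only [Multiset.insert_eq_cons] at h
      exact (Multiset.cons_inj_right p).mp h
    have hq : q = a ∨ q = b ∨ q = c := by
      have : q ∈ ({a, b, c} : Multiset V) := by rw [← h2]; simp
      simpa using this
    rcases hq with rfl | rfl | rfl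
    · have h3 : ({r, s} : Multiset V) = {b, c} := by
        simp only [Multiset.insert_eq_cons] at h2
        exact (Multiset.cons_inj_right q).mp h2
      rw [pair2 h3]
      simp [Sym2.eq_iff]
    · have h3 : ({r, s} : Multiset V) = {a, c} := by
        rw [(front3 a q c).1] at h2
        simp only [Multiset.insert_eq_cons] at h2
        exact (Multiset.cons_inj_right q).mp h2
      rw [pair2 h3]
      simp [Sym2.eq_iff]
    · have h3 : ({r, s} : Multiset V) = {a, b} := by
        rw [(front3 a b q).2] at h2
        simp only [Multiset.insert_eq_cons] at h2
        exact (Multiset.cons_inj_right q).mp h2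
      rw [pair2 h3]
      simp [Sym2.eq_iff]

/-- There is no finite simple graph `G` (with edges labelled bijectively by the eight
variables) whose toric ideal equals `⟨x₁x₂ − x₃x₄, x₁x₂ − x₅x₆, x₁x₂ − x₇x₈⟩`. -/
theorem stmt2 (K : Type*) [Field K] :
    ¬ ∃ (d : ℕ) (G : SimpleGraph (Fin d)) (e : Fin 8 → Sym2 (Fin d)),
      Function.Injective e ∧ G.edgeSet = Set.range e ∧
      (Ideal.span {X 0 * X 1 - X 2 * X 3, X 0 * X 1 - X 4 * X 5,
          X 0 * X 1 - X 6 * X 7} : Ideal (MvPolynomial (Fin 8) K)) =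
        RingHom.ker (toricMap K e).toRingHom := by
  rintro ⟨d, G, e, he, -, hker⟩
  classical
  -- choose representatives for the edges
  have hrep : ∀ i : Fin 8, ∃ x y : Fin d, e i = s(x, y) := fun i => by
    induction (e i) using Sym2.ind with
    | _ x y => exact ⟨x, y, rfl⟩
  choose a b hab using hrep
  -- each generator lies in the kernel
  have hgen : ∀ i j k l : Fin 8,
      (X i * X j - X k * X l : MvPolynomial (Fin 8) K) ∈
        Ideal.span ({X 0 * X 1 - X 2 * X 3, X 0 * X 1 - X 4 * X 5,
          X 0 * X 1 - X 6 * X 7} : Set (MvPolynomial (Fin 8) K)) →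
      ({a i, b i, a j, b j} : Multiset (Fin d)) = {a k, b k, a l, b l} := by
    intro i j k l hmem
    rw [hker, RingHom.mem_ker] at hmem
    have hX : ∀ m : Fin 8, (toricMap K e) (X m : MvPolynomial (Fin 8) K)
        = X (a m) * X (b m) := by
      intro m
      rw [toricMap, aeval_X, hab m]
      rfl
    have h0 : (toricMap K e) (X i * X j - X k * X l : MvPolynomial (Fin 8) K) = 0 := hmem
    rw [map_sub, map_mul, map_mul, hX, hX, hX, hX, sub_eq_zero] at h0
    exact mulX_eq_multiset K h0
  have h23m := (hgen 0 1 2 3 (Ideal.subset_span (Set.mem_insert _ _))).symm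
  have h45m := (hgen 0 1 4 5 (Ideal.subset_span (Set.mem_insert_of_mem _ (Set.mem_insert _ _)))).symm
  have h67m := (hgen 0 1 6 7 (Ideal.subset_span (Set.mem_insert_of_mem _ (Set.mem_insert_of_mem _ rfl)))).symm
  -- injectivity rules out coincidences among the Sym2 pairs of edges
  have contra : ∀ i j k l : Fin 8, i ≠ k → i ≠ l →
      s(e i, e j) ≠ s(e k, e l) := by
    intro i j k l h1 h2 h
    rcases Sym2.eq_iff.mp h with ⟨h', -⟩ | ⟨h', -⟩
    · exact h1 (he h')
    · exact h2 (he h')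
  -- the three alternative pairings, none of which can be the original one
  have key : ∀ i j : Fin 8, i ≠ 0 → i ≠ 1 →
      ({a i, b i, a j, b j} : Multiset (Fin d)) = {a 0, b 0, a 1, b 1} →
      s(s(a i, b i), s(a j, b j)) = s(s(a 0, a 1), s(b 0, b 1)) ∨
      s(s(a i, b i), s(a j, b j)) = s(s(a 0, b 1), s(b 0, a 1)) := by
    intro i j hi0 hi1 hm
    rcases pairing hm with h | h | h
    · exfalso
      rw [← hab i, ← hab j, ← hab 0, ← hab 1] at h
      exact contra i j 0 1 hi0 hi1 h
    · exact Or.inl h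
    · exact Or.inr h
  have h23 := key 2 3 (by decide) (by decide) h23m
  have h45 := key 4 5 (by decide) (by decide) h45m
  have h67 := key 6 7 (by decide) (by decide) h67m
  have dup : ∀ i j k l : Fin 8, i ≠ k → i ≠ l →
      s(s(a i, b i), s(a j, b j)) = s(s(a k, b k), s(a l, b l)) → False := by
    intro i j k l h1 h2 h
    rw [← hab i, ← hab j, ← hab k, ← hab l] at h
    exact contra i j k l h1 h2 h
  rcases h23 with h23 | h23 <;> rcases h45 with h45 | h45 <;> rcases h67 with h67 | h67
  · exact dup 2 3 4 5 (by decide) (by decide) (h23.trans h45.symm)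
  · exact dup 2 3 4 5 (by decide) (by decide) (h23.trans h45.symm)
  · exact dup 2 3 6 7 (by decide) (by decide) (h23.trans h67.symm)
  · exact dup 4 5 6 7 (by decide) (by decide) (h45.trans h67.symm)
  · exact dup 4 5 6 7 (by decide) (by decide) (h45.trans h67.symm)
  · exact dup 2 3 6 7 (by decide) (by decide) (h23.trans h67.symm)
  · exact dup 2 3 4 5 (by decide) (by decide) (h23.trans h45.symm)
  · exact dup 2 3 4 5 (by decide) (by decide) (h23.trans h45.symm)
end

section
/- Let G be the complete bipartite graph with parts {1,...,p} and {p+1,...,p+q}, edges {i, p+j} for 1 ≤ i ≤ p, 1 ≤ j ≤ q. Identify the variables of K[y_1,...,y_{pq}] with a p×q matrix (x_ij), where x_ij corresponds to the edge {i, p+j}. Then the toric ideal I_G (the kernel of the map x_ij ↦ t_i·t_{p+j}) is generated by the set of all 2-minors x_{ij}x_{i'j'} − x_{ij'}x_{i'j} (i < i', j < j') of the matrix X = (x_ij). -/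
/-!
The toric map sends `x^A` to `t^(margins A)`, where `margins A` records the row and column sums
of the exponent matrix `A`. Hence its kernel is spanned by the binomials `x^A - x^B` with equal
margins. Modulo the 2-minors such a binomial vanishes, by induction on the degree: if
`A (i, j) > 0`, then row `i` and column `j` of `B` are nonzero, say `B (i, j') > 0` and
`B (i', j) > 0`, and a 2-minor trades `x_{ij'} x_{i'j}` for `x_{ij} x_{i'j'}`; now `x_{ij}` divides
both monomials and can be cancelled.
-/

open MvPolynomial

theorem MvPolynomial.ker_le_of_sub_monomial_mem {R σ τ : Type*} [CommRing R]
    (φ : MvPolynomial σ R →ₗ[R] MvPolynomial τ R) (μ : (σ →₀ ℕ) → τ →₀ ℕ)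
    (hφ : ∀ A, φ (monomial A 1) = monomial (μ A) 1) (J : Submodule R (MvPolynomial σ R))
    (hJ : ∀ A B, μ A = μ B → monomial A 1 - monomial B 1 ∈ J) :
    LinearMap.ker φ ≤ J := by
  -- `ψ` picks one exponent in each fibre of `μ`, so that `f ≡ ψ (φ f)` modulo `J`.
  let ψ : MvPolynomial τ R →ₗ[R] MvPolynomial σ R :=
    (basisMonomials τ R).constr R fun m => monomial (Function.invFun μ m) 1
  have hψ (f : MvPolynomial σ R) : f - ψ (φ f) ∈ J := by
    induction f using MvPolynomial.induction_on' with
    | monomial A c =>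
      have hψA : ψ (φ (monomial A 1)) = monomial (Function.invFun μ (μ A)) 1 := by
        simpa [hφ] using (basisMonomials τ R).constr_basis R _ (μ A)
      rw [← mul_one c, ← smul_eq_mul, ← smul_monomial, map_smul, map_smul, hψA, ← smul_sub]
      exact J.smul_mem c (hJ A _ (Function.invFun_eq ⟨A, rfl⟩).symm)
    | add f g hf hg => simpa [add_sub_add_comm] using J.add_mem hf hg
  intro f hf
  simpa [LinearMap.mem_ker.1 hf] using hψ f

theorem Finsupp.exists_ne_zero_of_mapDomain_ne_zero {α β M : Type*} [AddCommMonoid M]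
    {f : α → β} {x : α →₀ M} {b : β} (h : x.mapDomain f b ≠ 0) : ∃ a, f a = b ∧ x a ≠ 0 := by
  classical
  obtain ⟨a, ha, rfl⟩ := Finset.mem_image.1 (mapDomain_support (mem_support_iff.2 h))
  exact ⟨a, rfl, mem_support_iff.1 ha⟩

theorem Finsupp.exists_eq_add_single_one {α : Type*} {A : α →₀ ℕ} {a : α} (h : A a ≠ 0) :
    ∃ A₀, A = A₀ + Finsupp.single a 1 :=
  ⟨A - Finsupp.single a 1,
    (tsub_add_cancel_of_le (Finsupp.single_le_iff.2 (Nat.one_le_iff_ne_zero.2 h))).symm⟩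

section CompleteBipartite

variable {ι κ : Type*}

def completeBipartiteEdge (ij : ι × κ) : Sym2 (ι ⊕ κ) := s(Sum.inl ij.1, Sum.inr ij.2)

noncomputable def margins : (ι × κ →₀ ℕ) →+ (ι ⊕ κ →₀ ℕ) :=
  Finsupp.mapDomain.addMonoidHom (Sum.inl ∘ Prod.fst) +
    Finsupp.mapDomain.addMonoidHom (Sum.inr ∘ Prod.snd)

@[simp]
theorem margins_single (i : ι) (j : κ) (n : ℕ) :
    margins (Finsupp.single (i, j) n) =
      Finsupp.single (Sum.inl i) n + Finsupp.single (Sum.inr j) n := by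
  simp [margins]

theorem margins_eq_zero_iff {A : ι × κ →₀ ℕ} : margins A = 0 ↔ A = 0 := by
  rw [← Finsupp.degree_eq_zero_iff (margins A), ← Finsupp.degree_eq_zero_iff A]
  simp [margins]

theorem exists_ne_zero_of_margins_inl_ne_zero {A : ι × κ →₀ ℕ} {i : ι}
    (h : margins A (Sum.inl i) ≠ 0) : ∃ j, A (i, j) ≠ 0 := by
  rw [margins, AddMonoidHom.add_apply, Finsupp.add_apply, Finsupp.mapDomain.addMonoidHom_apply,
    Finsupp.mapDomain.addMonoidHom_apply,
    Finsupp.mapDomain_of_notMem_range (f := Sum.inr ∘ Prod.snd) _ _ (by simp), add_zero] at h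
  obtain ⟨⟨i', j⟩, hi, hA⟩ := Finsupp.exists_ne_zero_of_mapDomain_ne_zero h
  cases Sum.inl_injective hi
  exact ⟨j, hA⟩

theorem exists_ne_zero_of_margins_inr_ne_zero {A : ι × κ →₀ ℕ} {j : κ}
    (h : margins A (Sum.inr j) ≠ 0) : ∃ i, A (i, j) ≠ 0 := by
  rw [margins, AddMonoidHom.add_apply, Finsupp.add_apply, Finsupp.mapDomain.addMonoidHom_apply,
    Finsupp.mapDomain.addMonoidHom_apply,
    Finsupp.mapDomain_of_notMem_range (f := Sum.inl ∘ Prod.fst) _ _ (by simp), zero_add] at h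
  obtain ⟨⟨i, j'⟩, hj, hA⟩ := Finsupp.exists_ne_zero_of_mapDomain_ne_zero h
  cases Sum.inr_injective hj
  exact ⟨i, hA⟩

theorem toricMap_completeBipartiteEdge_X (K : Type*) [Field K] (a : ι × κ) :
    toricMap K completeBipartiteEdge (X a) = X (Sum.inl a.1) * X (Sum.inr a.2) :=
  aeval_X _ _

theorem toricMap_completeBipartiteEdge_monomial (K : Type*) [Field K] (A : ι × κ →₀ ℕ) :
    toricMap K completeBipartiteEdge (monomial A 1) = monomial (margins A) 1 := by
  induction A using Finsupp.induction_linear with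
  | zero => simp
  | add A B hA hB => rw [← one_mul (1 : K), ← monomial_mul, map_mul, hA, hB, monomial_mul, map_add]
  | single a n =>
    rw [← X_pow_eq_monomial, map_pow, toricMap_completeBipartiteEdge_X, mul_pow,
      X_pow_eq_monomial, X_pow_eq_monomial, monomial_mul, one_mul, margins_single]

end CompleteBipartite

section TwoMinors

variable (R ι κ : Type*) [CommRing R] [LinearOrder ι] [LinearOrder κ]

def twoMinors : Set (MvPolynomial (ι × κ) R) :=
  {f | ∃ (i i' : ι) (j j' : κ), i < i' ∧ j < j' ∧
    f = X (i, j) * X (i', j') - X (i, j') * X (i', j)}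

variable {R ι κ}

local notation "π" => Ideal.Quotient.mk (Ideal.span (twoMinors R ι κ))

theorem mk_X_mul_X_swap (i i' : ι) (j j' : κ) :
    π (X (i, j) * X (i', j')) = π (X (i, j') * X (i', j)) := by
  have minor {i i' : ι} {j j' : κ} (hi : i < i') (hj : j < j') :
      π (X (i, j) * X (i', j')) = π (X (i, j') * X (i', j)) :=
    Ideal.Quotient.eq.2 (Ideal.subset_span ⟨i, i', j, j', hi, hj, rfl⟩)
  rcases lt_trichotomy i i' with hi | rfl | hi <;> rcases lt_trichotomy j j' with hj | rfl | hj
  · exact minor hi hj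
  · rfl
  · exact (minor hi hj).symm
  · rw [mul_comm]
  · rfl
  · rw [mul_comm]
  · rw [mul_comm, mul_comm (X (i, j'))]
    exact (minor hi hj).symm
  · rfl
  · rw [mul_comm, mul_comm (X (i, j'))]
    exact minor hi hj

theorem exists_mk_monomial_eq_add_single {B : ι × κ →₀ ℕ} {i : ι} {j : κ}
    (hi : margins B (Sum.inl i) ≠ 0) (hj : margins B (Sum.inr j) ≠ 0) :
    ∃ B₀, margins (B₀ + Finsupp.single (i, j) 1) = margins B ∧
      π (monomial (B₀ + Finsupp.single (i, j) 1) 1) = π (monomial B 1) := by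
  by_cases hij : B (i, j) ≠ 0
  · obtain ⟨B₀, rfl⟩ := Finsupp.exists_eq_add_single_one hij
    exact ⟨B₀, rfl, rfl⟩
  obtain ⟨j', hj'⟩ := exists_ne_zero_of_margins_inl_ne_zero hi
  obtain ⟨i', hi'⟩ := exists_ne_zero_of_margins_inr_ne_zero hj
  obtain ⟨B₁, rfl⟩ := Finsupp.exists_eq_add_single_one hj'
  have hB₁ : B₁ (i', j) ≠ 0 := by
    rcases eq_or_ne (i, j') (i', j) with hc | hc
    · obtain ⟨rfl, rfl⟩ := Prod.mk.inj hc
      exact absurd hj' hij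
    · simpa [Finsupp.single_apply, hc] using hi'
  obtain ⟨D, rfl⟩ := Finsupp.exists_eq_add_single_one hB₁
  refine ⟨D + Finsupp.single (i', j') 1, ?_, ?_⟩
  · simp only [map_add, margins_single]
    abel
  · have hswap := congrArg (π (monomial D 1) * ·) (mk_X_mul_X_swap (R := R) i i' j j')
    simp only [monomial_add_single, pow_one, map_mul] at hswap ⊢
    linear_combination hswap

theorem mk_monomial_eq_of_margins_eq {A B : ι × κ →₀ ℕ} (h : margins A = margins B) :
    π (monomial A 1) = π (monomial B 1) := by
  obtain ⟨n, hn⟩ : ∃ n, A.degree = n := ⟨_, rfl⟩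
  induction n generalizing A B with
  | zero =>
    rw [Finsupp.degree_eq_zero_iff] at hn
    subst hn
    rw [map_zero, eq_comm, margins_eq_zero_iff] at h
    rw [h]
  | succ n ih =>
    obtain ⟨⟨i, j⟩, hij⟩ := Finsupp.ne_iff.1 (mt (Finsupp.degree_eq_zero_iff A).2 (by omega))
    obtain ⟨A₀, rfl⟩ := Finsupp.exists_eq_add_single_one hij
    obtain ⟨B₀, hB₀, hπ⟩ := exists_mk_monomial_eq_add_single (R := R) (B := B) (i := i) (j := j)
      (by simp [← h]) (by simp [← h])
    have hA₀ : margins A₀ = margins B₀ := by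
      simpa [map_add] using h.trans hB₀.symm
    rw [← hπ, monomial_add_single, monomial_add_single, map_mul, map_mul,
      ih hA₀ (by simpa using hn)]

end TwoMinors

theorem ker_toricMap_completeBipartiteEdge_eq_span_twoMinors (K ι κ : Type*) [Field K]
    [LinearOrder ι] [LinearOrder κ] :
    RingHom.ker (toricMap K (completeBipartiteEdge (ι := ι) (κ := κ))).toRingHom =
      Ideal.span (twoMinors K ι κ) := by
  apply le_antisymm
  · exact MvPolynomial.ker_le_of_sub_monomial_mem (toricMap K completeBipartiteEdge).toLinearMap
      margins (toricMap_completeBipartiteEdge_monomial K) ((Ideal.span _).restrictScalars K)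
      fun A B h => Ideal.Quotient.eq.1 (mk_monomial_eq_of_margins_eq h)
  · rw [Ideal.span_le]
    rintro _ ⟨i, i', j, j', -, -, rfl⟩
    simp only [SetLike.mem_coe, RingHom.mem_ker, AlgHom.toRingHom_eq_coe, RingHom.coe_coe,
      map_sub, map_mul, toricMap_completeBipartiteEdge_X]
    ring

theorem stmt3_general (K : Type*) [Field K] (p q : ℕ) :
    RingHom.ker (toricMap K
        (fun ij : Fin p × Fin q => s(Sum.inl ij.1, Sum.inr ij.2) :
          Fin p × Fin q → Sym2 (Fin p ⊕ Fin q))).toRingHom =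
      Ideal.span {f : MvPolynomial (Fin p × Fin q) K |
        ∃ (i i' : Fin p) (j j' : Fin q), i < i' ∧ j < j' ∧
          f = X (i, j) * X (i', j') - X (i, j') * X (i', j)} :=
  ker_toricMap_completeBipartiteEdge_eq_span_twoMinors K (Fin p) (Fin q)

/-- The toric ideal of the complete bipartite graph `K_{p,q}` (edges `{i, p+j}`,
variable `x_{ij}` mapped to `t_i · t_{p+j}`) is generated by the 2-minors of the
`p × q` matrix `(x_{ij})`. -/
theorem stmt3 (K : Type*) [Field K] (p q : ℕ) (hp : 0 < p) (hq : 0 < q) :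
    RingHom.ker (toricMap K
        (fun ij : Fin p × Fin q => s(Sum.inl ij.1, Sum.inr ij.2) :
          Fin p × Fin q → Sym2 (Fin p ⊕ Fin q))).toRingHom =
      Ideal.span {f : MvPolynomial (Fin p × Fin q) K |
        ∃ (i i' : Fin p) (j j' : Fin q), i < i' ∧ j < j' ∧
          f = X (i, j) * X (i', j') - X (i, j') * X (i', j)} :=
  stmt3_general K p q
end

section
/- Let G be a finite simple graph obtained from a connected bipartite graph G' (with bipartition classes V_1 ⊔ V_2) by adding two new edges e = {1,2} and e' = {3,4}, where 1,2 ∈ V_1 and 3,4 ∈ V_2 and {1,3},{2,4} ∈ E(G'). Then: (a) every even cycle of G containing e or e' contains both e and e'; and (b) every odd cycle of G contains e or e'. -/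
/-!
Colour the vertices by the bipartition. Edges of `G'` join vertices of different colours, while
`e` and `e'` join vertices of the same colour. Along a closed walk the colour changes an even number
of times, so its length has the parity of the number of times it traverses `e` or `e'`; a cycle
traverses each of them at most once.
-/

theorem List.countP_eq_count_add_count {α : Type*} [DecidableEq α] {p : α → Bool} {a b : α}
    (hab : a ≠ b) {l : List α} (hp : ∀ x ∈ l, p x ↔ x = a ∨ x = b) :
    l.countP p = l.count a + l.count b := by
  induction l with
  | nil => rfl
  | cons y l ih =>
    rw [List.countP_cons, List.count_cons, List.count_cons,
      ih fun x hx => hp x (List.mem_cons_of_mem y hx)]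
    have hy := hp y List.mem_cons_self
    by_cases hya : y = a
    · subst hya; simp_all; omega
    · by_cases hyb : y = b
      · subst hyb; simp_all; omega
      · simp_all

namespace SimpleGraph

variable {V : Type*} (c : V → Bool)

namespace Walk

variable {H : SimpleGraph V}

theorem color_eq_iff_even_countP_not_isDiag {u v : V} (p : H.Walk u v) :
    c u = c v ↔ Even (p.edges.countP fun e => ¬ (e.map c).IsDiag) := by
  induction p with
  | nil => simp
  | @cons x y z _ q ih =>
    simp only [edges_cons, List.countP_cons, Sym2.map_mk, Sym2.mk_isDiag_iff, Nat.even_add, ← ih]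
    cases c x <;> cases c y <;> cases c z <;> simp

theorem even_length_iff_even_countP_isDiag {u : V} (p : H.Walk u u) :
    Even p.length ↔ Even (p.edges.countP fun e => (e.map c).IsDiag) := by
  have hbichromatic := (p.color_eq_iff_even_countP_not_isDiag c).mp rfl
  rw [← p.length_edges, List.length_eq_countP_add_countP (fun e => decide (e.map c).IsDiag),
    Nat.even_add]
  simp only [decide_eq_true_eq, iff_true_right hbichromatic]

end Walk

theorem isDiag_map_iff_mem_of_mem_edgeSet_sup_fromEdgeSet {G : SimpleGraph V}
    (hc : ∀ {x y : V}, G.Adj x y → c x ≠ c y) {S : Set (Sym2 V)} (hS : ∀ e ∈ S, (e.map c).IsDiag)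
    {e : Sym2 V} (he : e ∈ (G ⊔ fromEdgeSet S).edgeSet) :
    (e.map c).IsDiag ↔ e ∈ S := by
  rw [edgeSet_sup, edgeSet_fromEdgeSet] at he
  rcases he with hG | ⟨hS', -⟩
  · induction e using Sym2.ind with
    | _ x y =>
      refine iff_of_false ?_ fun hxy => ?_
      · simpa using hc hG
      · simpa using hc hG <| Sym2.mk_isDiag_iff.mp (by simpa using hS _ hxy)
  · exact iff_of_true (hS e hS') hS'

theorem even_length_iff_even_count_add_count [DecidableEq V] {G : SimpleGraph V}
    (hc : ∀ {x y : V}, G.Adj x y → c x ≠ c y) {a b : Sym2 V} (hab : a ≠ b)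
    (ha : (a.map c).IsDiag) (hb : (b.map c).IsDiag) {u : V}
    (p : (G ⊔ fromEdgeSet {a, b}).Walk u u) :
    Even p.length ↔ Even (p.edges.count a + p.edges.count b) := by
  rw [p.even_length_iff_even_countP_isDiag c, List.countP_eq_count_add_count hab]
  intro e he
  rw [decide_eq_true_iff, isDiag_map_iff_mem_of_mem_edgeSet_sup_fromEdgeSet c hc (by simp [ha, hb])
    (p.edges_subset_edgeSet he), Set.mem_insert_iff, Set.mem_singleton_iff]

end SimpleGraph

theorem stmt8_general {V : Type*} (G' : SimpleGraph V)
    (c : V → Bool) (hc : ∀ {x y : V}, G'.Adj x y → c x ≠ c y)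
    (v₁ v₂ w₁ w₂ : V)
    (hv₁ : c v₁ = true) (hv₂ : c v₂ = true)
    (hw₁ : c w₁ = false) (hw₂ : c w₂ = false)
    (G : SimpleGraph V)
    (hG : G = G' ⊔ SimpleGraph.fromEdgeSet {s(v₁, v₂), s(w₁, w₂)}) :
    (∀ (u : V) (w : G.Walk u u), w.IsCycle → Even w.length →
      (s(v₁, v₂) ∈ w.edges ∨ s(w₁, w₂) ∈ w.edges) →
      (s(v₁, v₂) ∈ w.edges ∧ s(w₁, w₂) ∈ w.edges)) ∧
    (∀ (u : V) (w : G.Walk u u), w.IsCycle → Odd w.length →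
      (s(v₁, v₂) ∈ w.edges ∨ s(w₁, w₂) ∈ w.edges)) := by
  classical
  subst hG
  have hne : s(v₁, v₂) ≠ s(w₁, w₂) := by
    intro h
    rcases Sym2.eq_iff.mp h with ⟨rfl, -⟩ | ⟨rfl, -⟩ <;> simp_all
  have hparity {u : V} (w : (G' ⊔ SimpleGraph.fromEdgeSet {s(v₁, v₂), s(w₁, w₂)}).Walk u u)
      (hw : w.IsCycle) :
      Even w.length ↔ Even ((if s(v₁, v₂) ∈ w.edges then 1 else 0) +
        (if s(w₁, w₂) ∈ w.edges then 1 else 0)) := by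
    rw [← hw.edges_nodup.count, ← hw.edges_nodup.count]
    exact SimpleGraph.even_length_iff_even_count_add_count c hc hne (by simp [hv₁, hv₂])
      (by simp [hw₁, hw₂]) w
  refine ⟨fun u w hw heven hmem => ?_, fun u w hw hodd => ?_⟩
  · rw [hparity w hw] at heven
    split_ifs at heven <;> simp_all
  · rw [← Nat.not_even_iff_odd, hparity w hw] at hodd
    split_ifs at hodd <;> simp_all

/-- Let `G'` be a connected bipartite graph with bipartition given by a 2-coloring `c`,
let `v₁, v₂` be distinct vertices in one class and `w₁, w₂` distinct vertices in the
other class with `{v₁,w₁}, {v₂,w₂} ∈ E(G')`, and let `G` be obtained from `G'` by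
adding the edges `e = {v₁,v₂}` and `e' = {w₁,w₂}`. Then:
(a) every even cycle of `G` containing `e` or `e'` contains both; and
(b) every odd cycle of `G` contains `e` or `e'`. -/
theorem stmt8 {V : Type*} (G' : SimpleGraph V) (hconn : G'.Connected)
    (c : V → Bool) (hc : ∀ {x y : V}, G'.Adj x y → c x ≠ c y)
    (v₁ v₂ w₁ w₂ : V)
    (hv₁ : c v₁ = true) (hv₂ : c v₂ = true)
    (hw₁ : c w₁ = false) (hw₂ : c w₂ = false)
    (hv : v₁ ≠ v₂) (hw : w₁ ≠ w₂)
    (h13 : G'.Adj v₁ w₁) (h24 : G'.Adj v₂ w₂)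
    (G : SimpleGraph V)
    (hG : G = G' ⊔ SimpleGraph.fromEdgeSet {s(v₁, v₂), s(w₁, w₂)}) :
    (∀ (u : V) (w : G.Walk u u), w.IsCycle → Even w.length →
      (s(v₁, v₂) ∈ w.edges ∨ s(w₁, w₂) ∈ w.edges) →
      (s(v₁, v₂) ∈ w.edges ∧ s(w₁, w₂) ∈ w.edges)) ∧
    (∀ (u : V) (w : G.Walk u u), w.IsCycle → Odd w.length →
      (s(v₁, v₂) ∈ w.edges ∨ s(w₁, w₂) ∈ w.edges)) :=
  stmt8_general G' c hc v₁ v₂ w₁ w₂ hv₁ hv₂ hw₁ hw₂ G hG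
end

section
/- Let M be a finite set of adjacent 2-minors of chessboard type whose intersection graph Γ_M is a cycle of length ≥ 8. Then M contains at least two free 2-minors, where a 2-minor ad − bc ∈ M (with a = x_{i,j}, b = x_{i,j+1}, c = x_{i+1,j}, d = x_{i+1,j+1}) is called free if either neither a nor d appears in any other 2-minor of M, or neither b nor c appears in any other 2-minor of M. -/
open MvPolynomial

/-- The four variables (matrix positions) appearing in the adjacent 2-minor with
upper-left corner `p = (a,b)`, namely `(a,b), (a,b+1), (a+1,b), (a+1,b+1)`. -/
def cornerVars (p : ℕ × ℕ) : Finset (ℕ × ℕ) :=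
  {(p.1, p.2), (p.1, p.2 + 1), (p.1 + 1, p.2), (p.1 + 1, p.2 + 1)}

/-- All variables appearing in some minor of `M`. -/
def mVars (M : Finset (ℕ × ℕ)) : Finset (ℕ × ℕ) := M.biUnion cornerVars

lemma mem_mVars {M : Finset (ℕ × ℕ)} {p : ℕ × ℕ} (hp : p ∈ M) {v : ℕ × ℕ}
    (hv : v ∈ cornerVars p) : v ∈ mVars M := Finset.mem_biUnion.2 ⟨p, hp, hv⟩

/-- The adjacent 2-minor `[a,a+1|b,b+1] = x_{a,b}x_{a+1,b+1} − x_{a,b+1}x_{a+1,b}`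
with corner `p = (a,b) ∈ M`, as a polynomial in the variables occurring in `M`. -/
noncomputable def adjMinor (K : Type*) [Field K] (M : Finset (ℕ × ℕ)) {p : ℕ × ℕ}
    (hp : p ∈ M) : MvPolynomial (mVars M) K :=
  X ⟨(p.1, p.2), mem_mVars hp (by simp [cornerVars])⟩ *
    X ⟨(p.1 + 1, p.2 + 1), mem_mVars hp (by simp [cornerVars])⟩ -
  X ⟨(p.1, p.2 + 1), mem_mVars hp (by simp [cornerVars])⟩ *
    X ⟨(p.1 + 1, p.2), mem_mVars hp (by simp [cornerVars])⟩

/-- The ideal `I_M` generated by the adjacent 2-minors of `M`. -/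
noncomputable def idealM (K : Type*) [Field K] (M : Finset (ℕ × ℕ)) :
    Ideal (MvPolynomial (mVars M) K) :=
  Ideal.span {f | ∃ (p : ℕ × ℕ) (hp : p ∈ M), f = adjMinor K M hp}

/-- `I_M` is the toric ideal of a finite simple graph: there is a graph `G` whose
edges are labelled bijectively by the variables occurring in `M`, with
`I_M = I_G = ker (x_v ↦ tᵢtⱼ)`. -/
def IsToricOfGraph (K : Type*) [Field K] (M : Finset (ℕ × ℕ)) : Prop :=
  ∃ (d : ℕ) (G : SimpleGraph (Fin d)) (e : mVars M → Sym2 (Fin d)),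
    Function.Injective e ∧ G.edgeSet = Set.range e ∧
    idealM K M = RingHom.ker (toricMap K e).toRingHom

/-- `M` is of chessboard type. -/
def Chessboard (M : Finset (ℕ × ℕ)) : Prop :=
  ∀ p ∈ M, ∀ q ∈ M,
    (p.1 = q.1 → p.2 < q.2 → p.2 + 1 < q.2) ∧
    (p.2 = q.2 → p.1 < q.1 → p.1 + 1 < q.1)

/-- The intersection graph `Γ_M`: two distinct minors are adjacent iff their row index
pairs `{a,a+1},{a',a'+1}` intersect and their column index pairs intersect. -/
def interGraph (M : Finset (ℕ × ℕ)) : SimpleGraph {x // x ∈ M} :=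
  SimpleGraph.fromRel fun p q =>
    (p : ℕ × ℕ).1 ≤ (q : ℕ × ℕ).1 + 1 ∧ (q : ℕ × ℕ).1 ≤ (p : ℕ × ℕ).1 + 1 ∧
    (p : ℕ × ℕ).2 ≤ (q : ℕ × ℕ).2 + 1 ∧ (q : ℕ × ℕ).2 ≤ (p : ℕ × ℕ).2 + 1

/-- `G` has no cycle of length 4. -/
def NoFourCycle {V : Type*} (G : SimpleGraph V) : Prop :=
  ¬ ∃ (u : V) (w : G.Walk u u), w.IsCycle ∧ w.length = 4

/-- Each connected component of `G` possesses at most one cycle: any two cycles lying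
in the same connected component have the same edge set. -/
def AtMostOneCyclePerComponent {V : Type*} (G : SimpleGraph V) : Prop :=
  ∀ (u v : V) (w₁ : G.Walk u u) (w₂ : G.Walk v v),
    w₁.IsCycle → w₂.IsCycle → G.Reachable u v →
    ∀ e, e ∈ w₁.edges ↔ e ∈ w₂.edges

/-- A 2-minor of `M` with corner `p` is free if either neither `x_{p}` nor
`x_{p+(1,1)}` appears in another 2-minor of `M`, or neither `x_{p+(0,1)}` nor
`x_{p+(1,0)}` does. -/
def IsFree (M : Finset (ℕ × ℕ)) (p : ℕ × ℕ) : Prop :=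
  (∀ q ∈ M, q ≠ p → (p.1, p.2) ∉ cornerVars q ∧ (p.1 + 1, p.2 + 1) ∉ cornerVars q) ∨
  (∀ q ∈ M, q ≠ p → (p.1, p.2 + 1) ∉ cornerVars q ∧ (p.1 + 1, p.2) ∉ cornerVars q)


namespace SimpleGraph.Walk

lemma support_getElem' {V : Type*} {G : SimpleGraph V} {u v : V} (w : G.Walk u v) :
    ∀ (i : ℕ) (h : i < w.support.length), w.support[i] = w.getVert i := by
  induction w with
  | nil => intro i h; simp at h; subst h; rfl
  | cons hadj p ih =>
    intro i h
    cases i with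
    | zero => rfl
    | succ j =>
      simp only [support_cons, List.getElem_cons_succ, getVert_cons_succ]
      exact ih j (by simpa [length_support] using (by simpa [support_cons, length_support] using h : j + 1 < p.length + 1 + 1))

lemma mem_edges_exists {V : Type*} {G : SimpleGraph V} {u v : V} (w : G.Walk u v) {e : Sym2 V}
    (he : e ∈ w.edges) : ∃ k, k < w.length ∧ e = s(w.getVert k, w.getVert (k + 1)) := by
  induction w with
  | nil => simp [edges_nil] at he
  | cons hadj p ih =>
    rw [edges_cons, List.mem_cons] at he
    rcases he with he | he
    · exact ⟨0, by simp [length_cons], by simpa [getVert_cons_succ] using he⟩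
    · obtain ⟨k, hk, hke⟩ := ih he
      exact ⟨k + 1, by simp [length_cons]; omega, by simpa [getVert_cons_succ] using hke⟩

end SimpleGraph.Walk

lemma adj_step {M : Finset (ℕ × ℕ)} (hM : Chessboard M) {p q : {x // x ∈ M}}
    (h : (interGraph M).Adj p q) :
    (((q : ℕ × ℕ).1 : ℤ) - ((p : ℕ × ℕ).1 : ℤ) = 1 ∨
      ((q : ℕ × ℕ).1 : ℤ) - ((p : ℕ × ℕ).1 : ℤ) = -1) ∧
    (((q : ℕ × ℕ).2 : ℤ) - ((p : ℕ × ℕ).2 : ℤ) = 1 ∨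
      ((q : ℕ × ℕ).2 : ℤ) - ((p : ℕ × ℕ).2 : ℤ) = -1) := by
  rw [interGraph, SimpleGraph.fromRel_adj] at h
  obtain ⟨hne, hr⟩ := h
  have hr' : (p : ℕ × ℕ).1 ≤ (q : ℕ × ℕ).1 + 1 ∧ (q : ℕ × ℕ).1 ≤ (p : ℕ × ℕ).1 + 1 ∧
      (p : ℕ × ℕ).2 ≤ (q : ℕ × ℕ).2 + 1 ∧ (q : ℕ × ℕ).2 ≤ (p : ℕ × ℕ).2 + 1 := by
    rcases hr with h | h
    · exact h
    · exact ⟨h.2.1, h.1, h.2.2.2, h.2.2.1⟩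
  have hnep : ¬((p : ℕ × ℕ).1 = (q : ℕ × ℕ).1 ∧ (p : ℕ × ℕ).2 = (q : ℕ × ℕ).2) := by
    rintro ⟨h1, h2⟩
    exact hne (Subtype.ext (Prod.ext h1 h2))
  have hpq := hM (p : ℕ × ℕ) p.2 (q : ℕ × ℕ) q.2
  have hqp := hM (q : ℕ × ℕ) q.2 (p : ℕ × ℕ) p.2
  obtain ⟨c1, c2, c3, c4⟩ := hr'
  constructor <;> [skip; skip] <;>
    (obtain ⟨d1, d2⟩ := hpq; obtain ⟨e1, e2⟩ := hqp; omega)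

lemma adj_of_close {M : Finset (ℕ × ℕ)} {p q : {x // x ∈ M}} (hne : p ≠ q)
    (h1 : ((q : ℕ × ℕ).1 : ℤ) ≤ ((p : ℕ × ℕ).1 : ℤ) + 1)
    (h2 : ((p : ℕ × ℕ).1 : ℤ) ≤ ((q : ℕ × ℕ).1 : ℤ) + 1)
    (h3 : ((q : ℕ × ℕ).2 : ℤ) ≤ ((p : ℕ × ℕ).2 : ℤ) + 1)
    (h4 : ((p : ℕ × ℕ).2 : ℤ) ≤ ((q : ℕ × ℕ).2 : ℤ) + 1) :
    (interGraph M).Adj p q := by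
  rw [interGraph, SimpleGraph.fromRel_adj]
  exact ⟨hne, Or.inl ⟨by omega, by omega, by omega, by omega⟩⟩

lemma freeAt_aux {M : Finset (ℕ × ℕ)} (hM : Chessboard M) (p : ℕ × ℕ) (hp : p ∈ M)
    (prev next : ℕ × ℕ)
    (cp dp cn dn : ℤ)
    (hcp : (prev.1 : ℤ) = (p.1 : ℤ) - cp) (hdp : (prev.2 : ℤ) = (p.2 : ℤ) - dp)
    (hcn : (next.1 : ℤ) = (p.1 : ℤ) + cn) (hdn : (next.2 : ℤ) = (p.2 : ℤ) + dn)
    (hσ : cp * dp = cn * dn)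
    (hσ1 : cn * dn = 1 ∨ cn * dn = -1)
    (hnbr : ∀ q : ℕ × ℕ, q ∈ M → q ≠ p →
      ((q.1 : ℤ) = (p.1 : ℤ) + 1 ∨ (q.1 : ℤ) = (p.1 : ℤ) - 1) →
      ((q.2 : ℤ) = (p.2 : ℤ) + 1 ∨ (q.2 : ℤ) = (p.2 : ℤ) - 1) →
      q = prev ∨ q = next) :
    IsFree M p := by
  have key : ∀ q : ℕ × ℕ, q ∈ M → q ≠ p →
      ((q.1 : ℤ) = (p.1 : ℤ) + 1 ∨ (q.1 : ℤ) = (p.1 : ℤ) - 1) →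
      ((q.2 : ℤ) = (p.2 : ℤ) + 1 ∨ (q.2 : ℤ) = (p.2 : ℤ) - 1) →
      ((q.1 : ℤ) - (p.1 : ℤ)) * ((q.2 : ℤ) - (p.2 : ℤ)) = cn * dn := by
    intro q hq hne h1 h2
    rcases hnbr q hq hne h1 h2 with rfl | rfl
    · rw [hcp, hdp, ← hσ]; ring
    · rw [hcn, hdn]; ring
  rcases hσ1 with h1 | h1
  · right
    intro q hq hne
    have hne' : ¬(q.1 = p.1 ∧ q.2 = p.2) := fun h => hne (Prod.ext h.1 h.2)
    have hMqp := hM q hq p hp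
    have hMpq := hM p hp q hq
    constructor
    · intro hmem
      simp only [cornerVars, Finset.mem_insert, Finset.mem_singleton, Prod.mk.injEq] at hmem
      rcases hmem with ⟨e1, e2⟩ | ⟨e1, e2⟩ | ⟨e1, e2⟩ | ⟨e1, e2⟩
      · omega
      · omega
      · have da : (q.1 : ℤ) - (p.1 : ℤ) = -1 := by omega
        have db : (q.2 : ℤ) - (p.2 : ℤ) = 1 := by omega
        have hk := key q hq hne (by omega) (by omega)
        rw [da, db, h1] at hk
        norm_num at hk
      · omega
    · intro hmem
      simp only [cornerVars, Finset.mem_insert, Finset.mem_singleton, Prod.mk.injEq] at hmem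
      rcases hmem with ⟨e1, e2⟩ | ⟨e1, e2⟩ | ⟨e1, e2⟩ | ⟨e1, e2⟩
      · omega
      · have da : (q.1 : ℤ) - (p.1 : ℤ) = 1 := by omega
        have db : (q.2 : ℤ) - (p.2 : ℤ) = -1 := by omega
        have hk := key q hq hne (by omega) (by omega)
        rw [da, db, h1] at hk
        norm_num at hk
      · omega
      · omega
  · left
    intro q hq hne
    have hne' : ¬(q.1 = p.1 ∧ q.2 = p.2) := fun h => hne (Prod.ext h.1 h.2)
    have hMqp := hM q hq p hp
    have hMpq := hM p hp q hq
    constructor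
    · intro hmem
      simp only [cornerVars, Finset.mem_insert, Finset.mem_singleton, Prod.mk.injEq] at hmem
      rcases hmem with ⟨e1, e2⟩ | ⟨e1, e2⟩ | ⟨e1, e2⟩ | ⟨e1, e2⟩
      · omega
      · omega
      · omega
      · have da : (q.1 : ℤ) - (p.1 : ℤ) = -1 := by omega
        have db : (q.2 : ℤ) - (p.2 : ℤ) = -1 := by omega
        have hk := key q hq hne (by omega) (by omega)
        rw [da, db, h1] at hk
        norm_num at hk
    · intro hmem
      simp only [cornerVars, Finset.mem_insert, Finset.mem_singleton, Prod.mk.injEq] at hmem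
      rcases hmem with ⟨e1, e2⟩ | ⟨e1, e2⟩ | ⟨e1, e2⟩ | ⟨e1, e2⟩
      · have da : (q.1 : ℤ) - (p.1 : ℤ) = 1 := by omega
        have db : (q.2 : ℤ) - (p.2 : ℤ) = 1 := by omega
        have hk := key q hq hne (by omega) (by omega)
        rw [da, db, h1] at hk
        norm_num at hk
      · omega
      · omega
      · omega


lemma core_seq (n : ℕ) (hn : 8 ≤ n) (c d : ℕ → ℤ)
    (hc : ∀ i, c i = 1 ∨ c i = -1) (hd : ∀ i, d i = 1 ∨ d i = -1)
    (hcn : c n = c 0) (hdn : d n = d 0)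
    (hsc : ∑ i ∈ Finset.range n, c i = 0) (hsd : ∑ i ∈ Finset.range n, d i = 0)
    (hprop : ∀ i, i + 3 ≤ n → c (i + 1) * d (i + 1) = -(c i * d i) →
      c (i + 2) * d (i + 2) = -(c (i + 1) * d (i + 1)) → c (i + 2) = c i) :
    ∃ i j, i < n ∧ j < n ∧ i ≠ j ∧ c i * d i = c (i + 1) * d (i + 1) ∧
      c j * d j = c (j + 1) * d (j + 1) := by
  by_contra hcon
  push_neg at hcon
  set S : ℕ → ℤ := fun i => c i * d i with hS
  have hs : ∀ i, S i = 1 ∨ S i = -1 := by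
    intro i; rcases hc i with h1 | h1 <;> rcases hd i with h2 | h2 <;> simp [hS, h1, h2]
  have hSn : S n = S 0 := by simp [hS, hcn, hdn]
  -- n is even
  have h2 : 2 ∣ n := by
    have : ((∑ i ∈ Finset.range n, c i : ℤ) : ZMod 2) = 0 := by rw [hsc]; simp
    rw [Int.cast_sum] at this
    have he : ∀ i ∈ Finset.range n, ((c i : ZMod 2)) = 1 := by
      intro i _; rcases hc i with h1 | h1 <;> rw [h1] <;> decide
    rw [Finset.sum_congr rfl he, Finset.sum_const, Finset.card_range, nsmul_eq_mul, mul_one] at this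
    exact (ZMod.natCast_eq_zero_iff n 2).mp this
  obtain ⟨m, hm⟩ := h2
  -- product identity
  have e1 : ∏ i ∈ Finset.range n, S (i + 1) = ∏ i ∈ Finset.range n, S i := by
    have h0 := Finset.prod_range_succ' (fun i => S i) n
    have h1 := Finset.prod_range_succ (fun i => S i) n
    have hS0 : S 0 ≠ 0 := by rcases hs 0 with h | h <;> rw [h] <;> norm_num
    have : (∏ i ∈ Finset.range n, S (i + 1)) * S 0 = (∏ i ∈ Finset.range n, S i) * S 0 := by
      rw [← h0, h1, hSn]
    exact mul_right_cancel₀ hS0 this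
  have hProd : ∏ i ∈ Finset.range n, (S i * S (i + 1)) = 1 := by
    rw [Finset.prod_mul_distrib, e1, ← Finset.prod_mul_distrib]
    apply Finset.prod_eq_one
    intro i _; rcases hs i with h | h <;> rw [h] <;> norm_num
  by_cases hex : ∃ i, i < n ∧ S i = S (i + 1)
  · -- exactly one equal pair: parity contradiction
    obtain ⟨i₀, hi₀, hSi₀⟩ := hex
    have honly : ∀ j ∈ (Finset.range n).erase i₀, S j * S (j + 1) = -1 := by
      intro j hj
      rw [Finset.mem_erase, Finset.mem_range] at hj
      have hne := hcon i₀ j hi₀ hj.2 (Ne.symm hj.1) hSi₀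
      rcases hs j with h1 | h1 <;> rcases hs (j + 1) with h2 | h2
      · exact absurd (h1.trans h2.symm) hne
      · rw [h1, h2]; norm_num
      · rw [h1, h2]; norm_num
      · exact absurd (h1.trans h2.symm) hne
    have hmem : i₀ ∈ Finset.range n := Finset.mem_range.mpr hi₀
    rw [← Finset.mul_prod_erase _ _ hmem, Finset.prod_congr rfl honly,
      Finset.prod_const, Finset.card_erase_of_mem hmem, Finset.card_range] at hProd
    have h1 : S i₀ * S (i₀ + 1) = 1 := by
      rw [← hSi₀]
      rcases hs i₀ with h | h <;> rw [h] <;> norm_num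
    rw [h1, one_mul] at hProd
    rcases Nat.even_or_odd (n - 1) with h | h
    · obtain ⟨k, hk⟩ := h; omega
    · rw [Odd.neg_one_pow h] at hProd; norm_num at hProd
  · -- no equal pair: alternating
    push_neg at hex
    have halt : ∀ i < n, S (i + 1) = -S i := by
      intro i hi
      have hne := hex i hi
      rcases hs i with h1 | h1 <;> rcases hs (i + 1) with h2 | h2
      · exact absurd (h1.trans h2.symm) hne
      · simp [h1, h2]
      · simp [h1, h2]
      · exact absurd (h1.trans h2.symm) hne
    have hcp : ∀ i, i + 3 ≤ n → c (i + 2) = c i := by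
      intro i h3
      exact hprop i h3 (halt i (by omega)) (halt (i + 1) (by omega))
    have hparC : ∀ i, i < n → c i = if i % 2 = 0 then c 0 else c 1 := by
      intro i
      induction i using Nat.strong_induction_on with
      | _ i ih =>
        intro hi
        rcases i with _ | i
        · simp
        rcases i with _ | j
        · simp
        rw [hcp j (by omega), ih j (by omega) (by omega)]
        have hmod : (j + 1 + 1) % 2 = j % 2 := by omega
        rw [hmod]
    have hparS : ∀ i, i < n → S i = if i % 2 = 0 then S 0 else -S 0 := by
      intro i
      induction i using Nat.strong_induction_on with
      | _ i ih =>
        intro hi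
        rcases i with _ | j
        · simp
        rw [halt j (by omega), ih j (by omega) (by omega)]
        rcases Nat.even_or_odd j with h | h
        · have h1 : j % 2 = 0 := Nat.even_iff.mp h
          have h2 : (j + 1) % 2 = 1 := by omega
          simp [h1, h2]
        · have h1 : j % 2 = 1 := Nat.odd_iff.mp h
          have h2 : (j + 1) % 2 = 0 := by omega
          simp [h1, h2]
    have sumPair : ∀ (f : ℕ → ℤ), (∀ i, i < n → f i = if i % 2 = 0 then f 0 else f 1) →
        ∀ k, 2 * k ≤ n → ∑ i ∈ Finset.range (2 * k), f i = k * (f 0 + f 1) := by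
      intro f hf k
      induction k with
      | zero => simp
      | succ k ih =>
        intro hk
        have h1 : 2 * (k + 1) = (2 * k + 1) + 1 := by ring
        rw [h1, Finset.sum_range_succ, Finset.sum_range_succ, ih (by omega),
          hf (2 * k) (by omega), hf (2 * k + 1) (by omega)]
        have e0 : (2 * k) % 2 = 0 := by omega
        have e2 : (2 * k + 1) % 2 = 1 := by omega
        rw [if_pos e0, if_neg (by omega)]
        push_cast
        ring
    have hmn : (8:ℕ) ≤ 2 * m := by omega
    have hc01 : c 1 = -c 0 := by
      have := hsc
      rw [hm, sumPair c hparC m (by omega)] at this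
      have hm0 : (m : ℤ) ≠ 0 := by exact_mod_cast (by omega : m ≠ 0)
      have := mul_eq_zero.mp this
      rcases this with h | h
      · exact absurd h hm0
      · linarith
    have hdval : ∀ i, i < n → d i = if i % 2 = 0 then d 0 else d 1 := by
      intro i hi
      have hci := hparC i hi
      have hsi := hparS i hi
      have hd0 : d 0 = S 0 * c 0 := by
        rcases hc 0 with h | h <;> simp [hS, h] <;> ring
      have hd1 : d 1 = -S 0 * c 1 := by
        have hS1 : S 1 = -S 0 := halt 0 (by omega)
        rcases hc 1 with h | h <;>
          (have := hS1; simp [hS, h] at this ⊢ <;> linarith)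
      have hdi : d i = S i * c i := by
        rcases hc i with h | h <;> simp [hS, h] <;> ring
      rcases Nat.even_or_odd i with h | h
      · have h1 : i % 2 = 0 := Nat.even_iff.mp h
        rw [if_pos h1]
        rw [hdi, hsi, hci, if_pos h1, if_pos h1, hd0]
      · have h1 : i % 2 = 1 := Nat.odd_iff.mp h
        rw [if_neg (by omega)]
        rw [hdi, hsi, hci, if_neg (by omega), if_neg (by omega), hd1]
    have hd01 : d 1 = d 0 := by
      have hS1 : S 1 = -S 0 := halt 0 (by omega)
      have hd0 : d 0 = S 0 * c 0 := by
        rcases hc 0 with h | h <;> simp [hS, h] <;> ring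
      have hd1' : d 1 = S 1 * c 1 := by
        rcases hc 1 with h | h <;> simp [hS, h] <;> ring
      rw [hd1', hS1, hc01, hd0]; ring
    have := hsd
    rw [hm, sumPair d hdval m (by omega), hd01] at this
    have hm0 : (m : ℤ) ≠ 0 := by exact_mod_cast (by omega : m ≠ 0)
    rcases mul_eq_zero.mp this with h | h
    · exact hm0 h
    · rcases hd 0 with h0 | h0 <;> rw [h0] at h <;> norm_num at h

/-- If `M` is of chessboard type and `Γ_M` is a cycle (of length ≥ 8), then `M`
contains at least two free 2-minors. -/
theorem stmt9 (M : Finset (ℕ × ℕ)) (hM : Chessboard M) (n : ℕ) (hn : 8 ≤ n)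
    (u : {x // x ∈ M}) (w : (interGraph M).Walk u u) (hcyc : w.IsCycle)
    (hlen : w.length = n) (hsupp : ∀ v : {x // x ∈ M}, v ∈ w.support)
    (hedge : ∀ e, e ∈ (interGraph M).edgeSet ↔ e ∈ w.edges) :
    ∃ p ∈ M, ∃ q ∈ M, p ≠ q ∧ IsFree M p ∧ IsFree M q := by
  classical
  have hn0 : 0 < n := by omega
  set V : ℕ → {x // x ∈ M} := fun i => w.getVert i with hV
  have hV0 : V 0 = u := w.getVert_zero
  have hVn : V n = u := by rw [hV]; simp only; rw [← hlen]; exact w.getVert_length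
  have hadj : ∀ i, i < n → (interGraph M).Adj (V i) (V (i + 1)) := by
    intro i hi
    exact w.adj_getVert_succ (by rw [hlen]; exact hi)
  have hsuplen : w.support.length = n + 1 := by
    rw [SimpleGraph.Walk.length_support, hlen]
  have hsup : ∀ i, i < n + 1 → ∀ (h : i < w.support.length), w.support[i] = V i := by
    intro i hi h
    exact w.support_getElem' i h
  have hnd := hcyc.support_nodup
  have htl : w.support.tail.length = n := by
    rw [List.length_tail, hsuplen]; omega
  have hinj : ∀ i j, 1 ≤ i → i ≤ n → 1 ≤ j → j ≤ n → V i = V j → i = j := by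
    intro i j hi1 hi2 hj1 hj2 hv
    obtain ⟨i0, rfl⟩ : ∃ i0, i = i0 + 1 := ⟨i - 1, by omega⟩
    obtain ⟨j0, rfl⟩ : ∃ j0, j = j0 + 1 := ⟨j - 1, by omega⟩
    have hti : i0 < w.support.tail.length := by omega
    have htj : j0 < w.support.tail.length := by omega
    have e1 : w.support.tail[i0] = V (i0 + 1) := by
      rw [List.getElem_tail]
      exact hsup (i0 + 1) (by omega) _
    have e2 : w.support.tail[j0] = V (j0 + 1) := by
      rw [List.getElem_tail]
      exact hsup (j0 + 1) (by omega) _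
    have := (hnd.getElem_inj_iff (hi := hti) (hj := htj)).mp
      (by rw [e1, e2]; exact hv)
    omega
  have hinj' : ∀ i j, i ≤ n → j ≤ n → V i = V j →
      i = j ∨ (i = 0 ∧ j = n) ∨ (i = n ∧ j = 0) := by
    intro i j hi hj hv
    rcases Nat.eq_zero_or_pos i with rfl | hi1
    · rcases Nat.eq_zero_or_pos j with rfl | hj1
      · left; rfl
      · have hvn : V n = V j := by rw [hVn, ← hV0]; exact hv
        have := hinj n j (by omega) le_rfl hj1 hj hvn
        right; left; exact ⟨rfl, this.symm⟩
    · rcases Nat.eq_zero_or_pos j with rfl | hj1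
      · have hvn : V i = V n := by rw [hVn, ← hV0]; exact hv
        have := hinj i n hi1 hi (by omega) le_rfl hvn
        right; right; exact ⟨this, rfl⟩
      · left; exact hinj i j hi1 hi hj1 hj hv
  have hedgesC : ∀ a b, (interGraph M).Adj a b →
      ∃ k, k < n ∧ ((V k = a ∧ V (k + 1) = b) ∨ (V k = b ∧ V (k + 1) = a)) := by
    intro a b hab
    have hmem : s(a, b) ∈ w.edges := (hedge _).mp hab
    obtain ⟨k, hk, hke⟩ := w.mem_edges_exists hmem
    rw [hlen] at hk
    refine ⟨k, hk, ?_⟩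
    rw [Sym2.eq_iff] at hke
    rcases hke with ⟨h1, h2⟩ | ⟨h1, h2⟩
    · exact Or.inl ⟨h1.symm, h2.symm⟩
    · exact Or.inr ⟨h2.symm, h1.symm⟩
  set c : ℕ → ℤ :=
    fun i => ((V (i % n + 1) : ℕ × ℕ).1 : ℤ) - ((V (i % n) : ℕ × ℕ).1 : ℤ) with hcD
  set d : ℕ → ℤ :=
    fun i => ((V (i % n + 1) : ℕ × ℕ).2 : ℤ) - ((V (i % n) : ℕ × ℕ).2 : ℤ) with hdD
  have hc1 : ∀ i, c i = 1 ∨ c i = -1 := fun i =>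
    (adj_step hM (hadj (i % n) (Nat.mod_lt _ hn0))).1
  have hd1 : ∀ i, d i = 1 ∨ d i = -1 := fun i =>
    (adj_step hM (hadj (i % n) (Nat.mod_lt _ hn0))).2
  have hcn : c n = c 0 := by rw [hcD]; simp [Nat.mod_self, Nat.zero_mod]
  have hdn : d n = d 0 := by rw [hdD]; simp [Nat.mod_self, Nat.zero_mod]
  have hsumc : ∑ i ∈ Finset.range n, c i = 0 := by
    have h1 : ∀ i ∈ Finset.range n, c i =
        ((V (i + 1) : ℕ × ℕ).1 : ℤ) - ((V i : ℕ × ℕ).1 : ℤ) := by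
      intro i hi
      rw [Finset.mem_range] at hi
      rw [hcD]; simp only [Nat.mod_eq_of_lt hi]
    have key : ∑ i ∈ Finset.range n, (((V (i + 1) : ℕ × ℕ).1 : ℤ) - ((V i : ℕ × ℕ).1 : ℤ)) =
        ((V n : ℕ × ℕ).1 : ℤ) - ((V 0 : ℕ × ℕ).1 : ℤ) :=
      Finset.sum_range_sub (fun j => ((V j : ℕ × ℕ).1 : ℤ)) n
    rw [Finset.sum_congr rfl h1, key]
    simp only [hVn, hV0, sub_self]
  have hsumd : ∑ i ∈ Finset.range n, d i = 0 := by
    have h1 : ∀ i ∈ Finset.range n, d i =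
        ((V (i + 1) : ℕ × ℕ).2 : ℤ) - ((V i : ℕ × ℕ).2 : ℤ) := by
      intro i hi
      rw [Finset.mem_range] at hi
      rw [hdD]; simp only [Nat.mod_eq_of_lt hi]
    have key : ∑ i ∈ Finset.range n, (((V (i + 1) : ℕ × ℕ).2 : ℤ) - ((V i : ℕ × ℕ).2 : ℤ)) =
        ((V n : ℕ × ℕ).2 : ℤ) - ((V 0 : ℕ × ℕ).2 : ℤ) :=
      Finset.sum_range_sub (fun j => ((V j : ℕ × ℕ).2 : ℤ)) n
    rw [Finset.sum_congr rfl h1, key]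
    simp only [hVn, hV0, sub_self]
  have hstep : ∀ i, i < n →
      ((V (i + 1) : ℕ × ℕ).1 : ℤ) = ((V i : ℕ × ℕ).1 : ℤ) + c i ∧
      ((V (i + 1) : ℕ × ℕ).2 : ℤ) = ((V i : ℕ × ℕ).2 : ℤ) + d i := by
    intro i hi
    constructor
    · rw [hcD]; simp only [Nat.mod_eq_of_lt hi]; ring
    · rw [hdD]; simp only [Nat.mod_eq_of_lt hi]; ring
  have noChord : ∀ i, i + 3 ≤ n → ¬ (interGraph M).Adj (V i) (V (i + 3)) := by
    intro i h3 hA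
    obtain ⟨k, hk, hor⟩ := hedgesC _ _ hA
    rcases hor with ⟨ha, hb⟩ | ⟨ha, hb⟩
    · have e1 := hinj' k i (by omega) (by omega) ha
      have e2 := hinj' (k + 1) (i + 3) (by omega) (by omega) hb
      omega
    · have e1 := hinj' k (i + 3) (by omega) (by omega) ha
      have e2 := hinj' (k + 1) i (by omega) (by omega) hb
      omega
  have hprop : ∀ i, i + 3 ≤ n → c (i + 1) * d (i + 1) = -(c i * d i) →
      c (i + 2) * d (i + 2) = -(c (i + 1) * d (i + 1)) → c (i + 2) = c i := by
    intro i h3 ha1 ha2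
    by_contra hneq
    have hci := hc1 i
    have hci2 := hc1 (i + 2)
    have hcm : c (i + 2) = -c i := by
      rcases hci with h | h <;> rcases hci2 with h' | h'
      · exact absurd (h'.trans h.symm) hneq
      · rw [h', h]
      · rw [h', h]; norm_num
      · exact absurd (h'.trans h.symm) hneq
    have hs2 : c (i + 2) * d (i + 2) = c i * d i := by rw [ha2, ha1]; ring
    have hdm : d (i + 2) = -d i := by
      rw [hcm] at hs2
      rcases hci with h | h <;> rw [h] at hs2 <;> linarith
    obtain ⟨hx1, hy1⟩ := hstep i (by omega)
    obtain ⟨hx2, hy2⟩ := hstep (i + 1) (by omega)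
    obtain ⟨hx3, hy3⟩ := hstep (i + 2) (by omega)
    have ei1 : i + 1 + 1 = i + 2 := by omega
    have ei2 : i + 2 + 1 = i + 3 := by omega
    rw [ei1] at hx2 hy2
    rw [ei2] at hx3 hy3
    have ex : ((V (i + 3) : ℕ × ℕ).1 : ℤ) = ((V i : ℕ × ℕ).1 : ℤ) + c (i + 1) := by
      rw [hx3, hx2, hx1, hcm]; ring
    have ey : ((V (i + 3) : ℕ × ℕ).2 : ℤ) = ((V i : ℕ × ℕ).2 : ℤ) + d (i + 1) := by
      rw [hy3, hy2, hy1, hdm]; ring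
    have hneV : V i ≠ V (i + 3) := by
      intro h
      have := hinj' i (i + 3) (by omega) (by omega) h
      omega
    apply noChord i h3
    have hcb := hc1 (i + 1)
    have hdb := hd1 (i + 1)
    exact adj_of_close hneV (by rw [ex]; rcases hcb with h | h <;> rw [h] <;> linarith)
      (by rw [ex]; rcases hcb with h | h <;> rw [h] <;> linarith)
      (by rw [ey]; rcases hdb with h | h <;> rw [h] <;> linarith)
      (by rw [ey]; rcases hdb with h | h <;> rw [h] <;> linarith)
  have freeAt : ∀ k, 1 ≤ k → k ≤ n → c (k - 1) * d (k - 1) = c k * d k →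
      IsFree M ((V k : ℕ × ℕ)) := by
    intro k hk1 hkn hsk
    have hnbr0 : ∀ b, (interGraph M).Adj (V k) b → b = V (k - 1) ∨ b = V (k % n + 1) := by
      intro b hb
      obtain ⟨j', hj', hor⟩ := hedgesC _ _ hb
      rcases hor with ⟨ha, hbb⟩ | ⟨ha, hbb⟩
      · have e := hinj' j' k (by omega) (by omega) ha
        rcases e with rfl | ⟨e0, e1⟩ | ⟨e0, e1⟩
        · right; rw [Nat.mod_eq_of_lt (by omega)]; exact hbb.symm
        · right; subst e0; rw [e1, Nat.mod_self]; exact hbb.symm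
        · omega
      · have e := hinj' (j' + 1) k (by omega) (by omega) hbb
        have ej : j' = k - 1 := by omega
        rw [← ej]; exact Or.inl ha.symm
    have hkk : V (k % n) = V k := by
      rcases Nat.lt_or_ge k n with h | h
      · rw [Nat.mod_eq_of_lt h]
      · have hkn' : k = n := by omega
        rw [hkn', Nat.mod_self, hV0, ← hVn]
    have hkk1 : ((V (k % n) : ℕ × ℕ).1 : ℤ) = ((V k : ℕ × ℕ).1 : ℤ) := by rw [hkk]
    have hkk2 : ((V (k % n) : ℕ × ℕ).2 : ℤ) = ((V k : ℕ × ℕ).2 : ℤ) := by rw [hkk]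
    obtain ⟨hp1, hp2⟩ := hstep (k - 1) (by omega)
    have ek : k - 1 + 1 = k := by omega
    rw [ek] at hp1 hp2
    have hxprev : ((V (k - 1) : ℕ × ℕ).1 : ℤ) = ((V k : ℕ × ℕ).1 : ℤ) - c (k - 1) := by
      linarith
    have hyprev : ((V (k - 1) : ℕ × ℕ).2 : ℤ) = ((V k : ℕ × ℕ).2 : ℤ) - d (k - 1) := by
      linarith
    have hxnext : ((V (k % n + 1) : ℕ × ℕ).1 : ℤ) = ((V k : ℕ × ℕ).1 : ℤ) + c k := by
      rw [hcD]; simp only; rw [hkk1]; ring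
    have hynext : ((V (k % n + 1) : ℕ × ℕ).2 : ℤ) = ((V k : ℕ × ℕ).2 : ℤ) + d k := by
      rw [hdD]; simp only; rw [hkk2]; ring
    have hσ1 : c k * d k = 1 ∨ c k * d k = -1 := by
      rcases hc1 k with h | h <;> rcases hd1 k with h' | h' <;> rw [h, h'] <;> norm_num
    refine freeAt_aux hM ((V k : ℕ × ℕ)) (V k).2 ((V (k - 1) : ℕ × ℕ))
      ((V (k % n + 1) : ℕ × ℕ)) (c (k - 1)) (d (k - 1)) (c k) (d k)
      hxprev hyprev hxnext hynext hsk hσ1 ?_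
    intro q hq hneq h1 h2
    have hAdj : (interGraph M).Adj (V k) ⟨q, hq⟩ := by
      refine adj_of_close (fun h => hneq (congrArg Subtype.val h).symm) ?_ ?_ ?_ ?_ <;> (dsimp only; omega)
    rcases hnbr0 _ hAdj with h | h
    · exact Or.inl (congrArg Subtype.val h)
    · exact Or.inr (congrArg Subtype.val h)
  obtain ⟨i, j, hi, hj, hij, hsi, hsj⟩ :=
    core_seq n hn c d hc1 hd1 hcn hdn hsumc hsumd hprop
  refine ⟨((V (i + 1) : ℕ × ℕ)), (V (i + 1)).2, ((V (j + 1) : ℕ × ℕ)), (V (j + 1)).2, ?_, ?_, ?_⟩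
  · intro h
    have h' : V (i + 1) = V (j + 1) := Subtype.ext h
    have := hinj (i + 1) (j + 1) (by omega) (by omega) (by omega) (by omega) h'
    omega
  · exact freeAt (i + 1) (by omega) (by omega) (by simpa using hsi)
  · exact freeAt (j + 1) (by omega) (by omega) (by simpa using hsj)
end

section
/- Let M be a finite set of adjacent 2-minors of chessboard type with Γ_M connected, having p vertices and q edges. If there exists a finite simple bipartite graph G (with n edges and d vertices, obtained as in the construction with d ≤ 4p − 2q and n = 4p − q) such that I_M = I_G, then, using that the codimension of I_M equals p and that the codimension of I_G equals n − d + 1, we conclude p = q + 1, i.e., Γ_M is a tree. -/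
open MvPolynomial

/-!
If `I_M = I_G`, then for every integer vector `z` in the kernel of the incidence map of `G` the
binomial `x^{z⁺} − x^{z⁻}` lies in `I_G = I_M`. Every element of `I_M` vanishes in the group
algebra of `ℤ^{vars} ⧸ ⟨minor vectors⟩`, so this kernel lies in the lattice spanned by the `p`
minor vectors and has rank at most `p`. As `G` is bipartite, the signed sum over its vertices kills
every column of the incidence map, whose rank is therefore at most `d − 1`. Rank–nullity gives
`n ≤ (d − 1) + p`, the inequality `codim I_G ≤ codim I_M`.

For `M` of chessboard type each variable lies in at most two minors, and the variables lying in two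
minors are in bijection with the edges of `Γ_M`, so `n = 4p − q`. With `d ≤ 4p − 2q` this gives
`q + 1 ≤ p`, whereas `p ≤ q + 1` because `Γ_M` is connected; equality makes `Γ_M` a tree.
-/

open SimpleGraph Finset Module

universe u

lemma LinearMap.finrank_range_add_finrank_ker_of_finite {R N : Type*} {M : Type u} [Ring R]
    [HasRankNullity.{u} R] [StrongRankCondition R] [AddCommGroup M] [Module R M]
    [Module.Finite R M] [AddCommGroup N] [Module R N] (f : M →ₗ[R] N) :
    finrank R (LinearMap.range f) + finrank R (LinearMap.ker f) = finrank R M := by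
  rw [← f.quotKerEquivRange.finrank_eq]
  exact Submodule.finrank_quotient_add_finrank _

lemma mem_cornerVars_iff {P v : ℕ × ℕ} :
    v ∈ cornerVars P ↔ (v.1 = P.1 ∨ v.1 = P.1 + 1) ∧ (v.2 = P.2 ∨ v.2 = P.2 + 1) := by
  simp only [cornerVars, mem_insert, mem_singleton, Prod.ext_iff]
  omega

lemma card_cornerVars (P : ℕ × ℕ) : #(cornerVars P) = 4 := by
  simp [cornerVars, card_insert_of_notMem, Prod.ext_iff]

/-- For adjacent minors of a chessboard set this is their unique common variable. -/
def sharedCorner {M : Finset (ℕ × ℕ)} : Sym2 M → ℕ × ℕ :=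
  Sym2.lift ⟨fun P Q => (max P.1.1 Q.1.1, max P.1.2 Q.1.2), fun P Q => by simp [max_comm]⟩

def minorsAt (M : Finset (ℕ × ℕ)) (v : ℕ × ℕ) : Finset M := {R | v ∈ cornerVars R}

namespace Chessboard

variable {M : Finset (ℕ × ℕ)}

lemma adj_and_sharedCorner_eq (hM : Chessboard M) {P Q : M} {v : ℕ × ℕ} (hPQ : P ≠ Q)
    (hP : v ∈ cornerVars P) (hQ : v ∈ cornerVars Q) :
    (interGraph M).Adj P Q ∧ sharedCorner s(P, Q) = v := by
  have hP' := hM P P.2 Q Q.2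
  have hQ' := hM Q Q.2 P P.2
  rw [mem_cornerVars_iff] at hP hQ
  rw [Ne, ← Subtype.coe_inj, Prod.ext_iff] at hPQ
  simp only [interGraph, fromRel_adj, sharedCorner, Sym2.lift_mk, Prod.ext_iff, ne_eq,
    ← Subtype.coe_inj]
  omega

lemma mem_edge_iff (hM : Chessboard M) {s : Sym2 M} (hs : s ∈ (interGraph M).edgeSet) (R : M) :
    R ∈ s ↔ sharedCorner s ∈ cornerVars R := by
  induction s using Sym2.ind with
  | _ P Q =>
  have hPR := hM P P.2 R R.2
  have hRP := hM R R.2 P P.2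
  have hQR := hM Q Q.2 R R.2
  have hRQ := hM R R.2 Q Q.2
  have hPQ := hM P P.2 Q Q.2
  have hQP := hM Q Q.2 P P.2
  simp only [mem_edgeSet, interGraph, fromRel_adj, ne_eq, ← Subtype.coe_inj, Prod.ext_iff] at hs
  simp only [Sym2.mem_iff, sharedCorner, Sym2.lift_mk, mem_cornerVars_iff, ← Subtype.coe_inj,
    Prod.ext_iff]
  omega

lemma minorsAt_sharedCorner (hM : Chessboard M) {s : Sym2 M}
    (hs : s ∈ (interGraph M).edgeSet) :
    minorsAt M (sharedCorner s) = s.toFinset := by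
  ext R
  simp [minorsAt, mem_edge_iff hM hs]

lemma card_minorsAt_le_two (hM : Chessboard M) (v : ℕ × ℕ) : #(minorsAt M v) ≤ 2 := by
  by_contra! h
  obtain ⟨P, hP, Q, hQ, R, hR, hPQ, hPR, hQR⟩ := two_lt_card.1 h
  simp only [minorsAt, mem_filter, mem_univ, true_and] at hP hQ hR
  obtain ⟨hadj, rfl⟩ := adj_and_sharedCorner_eq hM hPQ hP hQ
  rcases (mem_edge_iff hM hadj R).2 hR with h | h <;> simp_all

lemma ncard_edgeSet (hM : Chessboard M) :
    (interGraph M).edgeSet.ncard = #{v ∈ mVars M | #(minorsAt M v) = 2} := by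
  rw [← Set.ncard_coe_finset]
  refine Set.ncard_congr (fun s _ => sharedCorner s) ?_ ?_ ?_
  · intro s hs
    induction s using Sym2.ind with
    | _ P Q =>
    have hPQ : P ≠ Q := (interGraph M).ne_of_adj hs
    simp only [coe_filter, Set.mem_ofPred_eq, minorsAt_sharedCorner hM hs, Sym2.toFinset_mk_eq,
      card_pair hPQ, and_true]
    exact mem_mVars P.2 (((mem_edge_iff hM hs) P).1 (Sym2.mem_mk_left P Q))
  · intro s t hs ht hst
    exact Sym2.ext fun R => by rw [mem_edge_iff hM hs, mem_edge_iff hM ht, hst]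
  · intro v hv
    simp only [coe_filter, Set.mem_ofPred_eq] at hv
    obtain ⟨P, Q, hPQ, hPQv⟩ := card_eq_two.1 hv.2
    have hP : P ∈ minorsAt M v := hPQv ▸ mem_insert_self P {Q}
    have hQ : Q ∈ minorsAt M v := hPQv ▸ mem_insert_of_mem (mem_singleton_self Q)
    simp only [minorsAt, mem_filter, mem_univ, true_and] at hP hQ
    exact ⟨s(P, Q), (adj_and_sharedCorner_eq hM hPQ hP hQ).1,
      (adj_and_sharedCorner_eq hM hPQ hP hQ).2⟩

theorem four_mul_card (hM : Chessboard M) :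
    4 * #M = #(mVars M) + (interGraph M).edgeSet.ncard := by
  have hcount := sum_card_bipartiteAbove_eq_sum_card_bipartiteBelow (s := (univ : Finset M))
    (t := mVars M) (r := fun (R : M) v => v ∈ cornerVars R)
  have habove :
      ∀ R : M, #(bipartiteAbove (fun (R : M) v => v ∈ cornerVars R) (mVars M) R) = 4 := by
    intro R
    rw [bipartiteAbove, filter_mem_eq_inter, inter_eq_right.2 fun v hv => mem_mVars R.2 hv,
      card_cornerVars]
  have hbelow : ∀ v ∈ mVars M,
      #(bipartiteBelow (fun (R : M) v => v ∈ cornerVars R) univ v) =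
        1 + if #(minorsAt M v) = 2 then 1 else 0 := by
    intro v hv
    have hpos : 0 < #(minorsAt M v) := by
      obtain ⟨P, hP, hvP⟩ := mem_biUnion.1 hv
      exact card_pos.2 ⟨⟨P, hP⟩, by simpa [minorsAt] using hvP⟩
    have := card_minorsAt_le_two hM v
    change #(minorsAt M v) = _
    split_ifs <;> omega
  rw [sum_congr rfl fun R _ => habove R, sum_congr rfl hbelow, sum_add_distrib, ← card_filter]
    at hcount
  rw [ncard_edgeSet hM]
  simpa [mul_comm] using hcount

end Chessboard

section ToricIdeals

variable (K : Type*) [Field K] {σ V : Type*}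

noncomputable def incidenceVec : Sym2 V → V →₀ ℕ :=
  Sym2.lift ⟨fun i j => Finsupp.single i 1 + Finsupp.single j 1, fun _ _ => add_comm _ _⟩

lemma edgeMonomial_eq_monomial (s : Sym2 V) :
    edgeMonomial K s = monomial (incidenceVec s) 1 := by
  induction s using Sym2.ind with
  | _ i j => simp [edgeMonomial, incidenceVec, X, monomial_mul]

lemma toricMap_monomial (e : σ → Sym2 V) (u : σ →₀ ℕ) :
    toricMap K e (monomial u 1) = monomial (u.sum fun x n => n • incidenceVec (e x)) 1 := by
  simp only [toricMap, edgeMonomial_eq_monomial, aeval_monomial, monomial_pow, one_pow,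
    monomial_finsupp_sum_index, map_one]

/-- The kernel of this map is the lattice ideal of `L`. -/
noncomputable def latticeMap (L : Submodule ℤ (σ → ℤ)) [DecidableEq σ] :
    MvPolynomial σ K →ₐ[K] AddMonoidAlgebra K ((σ → ℤ) ⧸ L) :=
  aeval fun x => AddMonoidAlgebra.single (L.mkQ (Pi.single x 1)) 1

variable [DecidableEq σ]

lemma latticeMap_monomial (L : Submodule ℤ (σ → ℤ)) (u : σ →₀ ℕ) :
    latticeMap K L (monomial u 1) = AddMonoidAlgebra.single (L.mkQ fun x => (u x : ℤ)) 1 := by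
  simp only [latticeMap, aeval_monomial, map_one, one_mul, Finsupp.prod,
    AddMonoidAlgebra.single_pow, one_pow, AddMonoidAlgebra.prod_single, prod_const_one]
  congr 1
  simp only [← map_nsmul, ← map_sum]
  congr 1
  ext y
  simp +contextual [Finset.sum_apply, Pi.single_apply]

lemma sub_mem_of_monomial_sub_mem_ker (L : Submodule ℤ (σ → ℤ)) {u v : σ →₀ ℕ}
    (h : monomial u 1 - monomial v 1 ∈ RingHom.ker (latticeMap K L)) :
    (fun x => (u x : ℤ) - v x) ∈ L := by
  rw [RingHom.mem_ker, map_sub, sub_eq_zero, latticeMap_monomial, latticeMap_monomial,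
    AddMonoidAlgebra.single_left_inj one_ne_zero, Submodule.mkQ_apply, Submodule.mkQ_apply,
    Submodule.Quotient.eq] at h
  exact h

end ToricIdeals

section Incidence

variable {σ V : Type*} [Fintype σ]

noncomputable def incidenceMap (e : σ → Sym2 V) : (σ → ℤ) →ₗ[ℤ] (V → ℤ) :=
  Fintype.linearCombination ℤ fun x v => (incidenceVec (e x) v : ℤ)

lemma incidenceMap_apply (e : σ → Sym2 V) (w : σ → ℤ) :
    incidenceMap e w = ∑ x, w x • fun v => (incidenceVec (e x) v : ℤ) :=
  rfl

lemma finrank_range_incidenceMap_add_one_le [Fintype V] [Nonempty V] {G : SimpleGraph V}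
    (hG : G.Colorable 2) {e : σ → Sym2 V} (he : ∀ x, e x ∈ G.edgeSet) :
    finrank ℤ (LinearMap.range (incidenceMap e)) + 1 ≤ Fintype.card V := by
  classical
  obtain ⟨c⟩ := hG
  let sign : (V → ℤ) →ₗ[ℤ] ℤ := Fintype.linearCombination ℤ fun v => (-1) ^ (c v : ℕ)
  have hsign : ∀ s ∈ G.edgeSet, sign (fun v => (incidenceVec s v : ℤ)) = 0 := by
    intro s
    induction s using Sym2.ind with
    | _ i j =>
    intro hij
    have hne : ∀ a b : Fin 2, a ≠ b → (-1 : ℤ) ^ (a : ℕ) + (-1) ^ (b : ℕ) = 0 := by decide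
    simpa [sign, Fintype.linearCombination_apply, incidenceVec, Finsupp.single_apply, add_mul,
      sum_add_distrib, Nat.cast_ite, ite_mul] using hne _ _ (c.valid hij)
  have hrange : LinearMap.range (incidenceMap e) ≤ LinearMap.ker sign := by
    rintro _ ⟨w, rfl⟩
    rw [LinearMap.mem_ker, incidenceMap_apply, map_sum]
    exact sum_eq_zero fun x _ => by rw [map_smul, hsign _ (he x), smul_zero]
  have hsurj : Function.Surjective sign := by
    obtain ⟨v⟩ := ‹Nonempty V›
    intro r
    refine ⟨Pi.single v (r * (-1) ^ (c v : ℕ)), ?_⟩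
    simp [sign, mul_assoc, ← pow_add]
  have := (LinearMap.finrank_range_add_finrank_ker_of_finite sign)
  rw [LinearMap.range_eq_top.2 hsurj, finrank_top, finrank_self, finrank_fintype_fun_eq_card]
    at this
  have := Submodule.finrank_mono hrange
  omega

end Incidence

section MinorLattice

variable (K : Type*) [Field K] (M : Finset (ℕ × ℕ))

noncomputable def minorVec {P : ℕ × ℕ} (hP : P ∈ M) : mVars M → ℤ :=
  Pi.single ⟨(P.1, P.2), mem_mVars hP (by simp [cornerVars])⟩ 1 +
    Pi.single ⟨(P.1 + 1, P.2 + 1), mem_mVars hP (by simp [cornerVars])⟩ 1 -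
    Pi.single ⟨(P.1, P.2 + 1), mem_mVars hP (by simp [cornerVars])⟩ 1 -
    Pi.single ⟨(P.1 + 1, P.2), mem_mVars hP (by simp [cornerVars])⟩ 1

noncomputable def minorLattice : Submodule ℤ (mVars M → ℤ) :=
  Submodule.span ℤ (Set.range fun P : M => minorVec M P.2)

lemma finrank_minorLattice_le : finrank ℤ (minorLattice M) ≤ #M :=
  (finrank_range_le_card (R := ℤ) fun P : M => minorVec M P.2).trans_eq (Fintype.card_coe M)

lemma idealM_le_ker_latticeMap : idealM K M ≤ RingHom.ker (latticeMap K (minorLattice M)) := by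
  rw [idealM, Ideal.span_le]
  rintro _ ⟨P, hP, rfl⟩
  simp only [SetLike.mem_coe, RingHom.mem_ker, adjMinor, latticeMap, map_sub, map_mul, aeval_X,
    AddMonoidAlgebra.single_mul_single, mul_one, sub_eq_zero,
    AddMonoidAlgebra.single_left_inj one_ne_zero, Submodule.mkQ_apply]
  rw [← Submodule.Quotient.mk_add, ← Submodule.Quotient.mk_add, Submodule.Quotient.eq]
  exact Submodule.subset_span ⟨⟨P, hP⟩, by simp only [minorVec]; abel⟩

end MinorLattice

lemma ker_incidenceMap_le {K σ V : Type*} [Field K] [Fintype σ] [DecidableEq σ]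
    {e : σ → Sym2 V} {L : Submodule ℤ (σ → ℤ)}
    (hL : RingHom.ker (toricMap K e).toRingHom ≤ RingHom.ker (latticeMap K L)) :
    LinearMap.ker (incidenceMap e) ≤ L := by
  intro z hz
  let u : σ →₀ ℕ := Finsupp.equivFunOnFinite.symm fun x => (z x).toNat
  let v : σ →₀ ℕ := Finsupp.equivFunOnFinite.symm fun x => (-z x).toNat
  have huv : (fun x => (u x : ℤ) - v x) = z := funext fun x => Int.toNat_sub_toNat_neg (z x)
  have hexp :
      (u.sum fun x n => n • incidenceVec (e x)) = v.sum fun x n => n • incidenceVec (e x) := by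
    ext y
    have hy := congrFun (LinearMap.mem_ker.1 hz) y
    rw [← huv, incidenceMap_apply] at hy
    simp only [Finsupp.sum_apply, Finsupp.smul_apply, smul_eq_mul]
    rw [Finsupp.sum_fintype _ _ (by simp), Finsupp.sum_fintype _ _ (by simp)]
    simp only [zsmul_eq_mul, Int.cast_sub, Int.cast_natCast, sub_mul, Finset.sum_apply,
      Pi.sub_apply, Pi.mul_apply, Pi.natCast_apply, sum_sub_distrib, Pi.zero_apply,
      sub_eq_zero] at hy
    exact_mod_cast hy
  rw [← huv]
  refine sub_mem_of_monomial_sub_mem_ker K L (hL ?_)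
  simp [RingHom.mem_ker, toricMap_monomial, hexp]

theorem card_mVars_add_one_le {K V : Type*} [Field K] [Fintype V] [Nonempty V]
    {M : Finset (ℕ × ℕ)} {G : SimpleGraph V} {e : mVars M → Sym2 V}
    (hG : G.Colorable 2) (he : ∀ x, e x ∈ G.edgeSet)
    (hI : idealM K M = RingHom.ker (toricMap K e).toRingHom) :
    #(mVars M) + 1 ≤ Fintype.card V + #M := by
  classical
  have hker : finrank ℤ (LinearMap.ker (incidenceMap e)) ≤ #M :=
    (Submodule.finrank_mono (ker_incidenceMap_le (hI ▸ idealM_le_ker_latticeMap K M))).trans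
      (finrank_minorLattice_le M)
  have hrange := finrank_range_incidenceMap_add_one_le hG he
  have := (incidenceMap e).finrank_range_add_finrank_ker_of_finite
  rw [finrank_fintype_fun_eq_card, Fintype.card_coe] at this
  omega

/-- If `M` is of chessboard type with `Γ_M` connected (`p` vertices, `q` edges) and
`I_M` is the toric ideal of a connected bipartite graph `G` with `d ≤ 4p − 2q`
vertices (its number of edges being `4p − q`, the number of variables of `M`), then
`p = q + 1`, i.e. `Γ_M` is a tree. -/
theorem stmt13 (K : Type*) [Field K] (M : Finset (ℕ × ℕ)) (hM : Chessboard M)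
    (hconn : (interGraph M).Connected) (p q : ℕ) (hp : M.card = p)
    (hq : (interGraph M).edgeSet.ncard = q)
    (h : ∃ (d : ℕ) (G : SimpleGraph (Fin d)) (e : mVars M → Sym2 (Fin d)),
      Function.Injective e ∧ G.edgeSet = Set.range e ∧
      G.Connected ∧ G.Colorable 2 ∧ d ≤ 4 * p - 2 * q ∧
      idealM K M = RingHom.ker (toricMap K e).toRingHom) :
    p = q + 1 ∧ (interGraph M).IsTree := by
  obtain ⟨d, G, e, -, hrange, hGconn, hG, hd, hI⟩ := h
  have := hGconn.nonempty
  have hd0 : 0 < d := Fin.pos_iff_nonempty.2 this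
  have hcodim := card_mVars_add_one_le hG (fun x => hrange ▸ Set.mem_range_self x) hI
  have hcount := hM.four_mul_card
  have hcard : Nat.card M = p := by simp [hp]
  have hedges : Nat.card (interGraph M).edgeSet = q := by rw [Nat.card_coe_set_eq, hq]
  have hle := hconn.card_vert_le_card_edgeSet_add_one
  rw [Fintype.card_fin] at hcodim
  rw [hcard, hedges] at hle
  have hpq : p = q + 1 := by omega
  exact ⟨hpq, isTree_iff_connected_and_card.2 ⟨hconn, by rw [hcard, hedges, hpq]⟩⟩
end
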